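/- arXiv:2110.01570 — 2 statements merged into one kernel-verified Lean document; each statement's English description precedes it below -/
import Mathlib

section
/- Suppose 0 < 1/m ≪ ε ≪ γ, d_0, 1/k, 1/ℓ with k ∈ ℕ∖{1}, and suppose: F is an ℓ-vertex k-graph; d_0 ≤ d_j ≤ 1−d_0 for every j ∈ [k−1]∖{1}; H = {H^(j)}_{j=1}^{k} is an (m,ℓ,k)-complex with H^(1) = {V_1,…,V_ℓ}; for each k-element subset Λ of [ℓ], the restricted complex H[Λ] is an (ε,(d_2,…,d_{k−1},p_Λ))-regular (m,k,k)-complex; and σ : V(F) → [ℓ] is a bijection. Then IC_σ(F,H) = (∏_{e∈F} p_{σ(e)} · ∏_{e∉F, |e|=k} (1−p_{σ(e)}) ± γ) · ∏_{j=2}^{k−1} d_j^{C(ℓ,j)} · m^ℓ. -/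
namespace HypReg

open Finset

attribute [local instance 10] Classical.propDecidable

noncomputable section

variable {V : Type*} [DecidableEq V]

/-- Representation of a 1-graph: the set of singletons of `U`. -/
def sing (U : Finset V) : Finset (Finset V) :=
  U.image fun v => ({v} : Finset V)

/-- `Kset W j i B`: the i-element subsets of `W` all of whose j-element subsets lie in `B`. -/
def Kset (W : Finset V) (j i : ℕ) (B : Finset (Finset V)) : Finset (Finset V) :=
  (W.powersetCard i).filter fun S => ∀ T ∈ S.powersetCard j, T ∈ B

/-- Clique operator which, at level 1, uses the ambient family `cr` of crossing i-sets. -/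
def KsetC (W : Finset V) (cr : Finset (Finset V)) (j i : ℕ) (B : Finset (Finset V)) :
    Finset (Finset V) :=
  if j = 1 then cr.filter fun S => ∀ v ∈ S, ({v} : Finset V) ∈ B
  else Kset W j i B

/-- `A` (a (j+1)-graph) is (ε,d)-regular with respect to the j-graph `B` (plain clique sets). -/
def RegPair (W : Finset V) (j : ℕ) (ε d : ℝ) (A B : Finset (Finset V)) : Prop :=
  ∀ Q ⊆ B, ε * ((Kset W j (j+1) B).card : ℝ) ≤ ((Kset W j (j+1) Q).card : ℝ) →
    |((A ∩ Kset W j (j+1) Q).card : ℝ) - d * ((Kset W j (j+1) Q).card : ℝ)|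
      ≤ ε * ((Kset W j (j+1) Q).card : ℝ)

/-- (ε,d)-regularity with crossing-aware clique sets. -/
def RegPairC (W : Finset V) (cr : Finset (Finset V)) (j : ℕ) (ε d : ℝ)
    (A B : Finset (Finset V)) : Prop :=
  ∀ Q ⊆ B, ε * ((KsetC W cr j (j+1) B).card : ℝ) ≤ ((KsetC W cr j (j+1) Q).card : ℝ) →
    |((A ∩ KsetC W cr j (j+1) Q).card : ℝ) - d * ((KsetC W cr j (j+1) Q).card : ℝ)|
      ≤ ε * ((KsetC W cr j (j+1) Q).card : ℝ)

/-- Relative density `d(A | B)` of the (j+1)-graph `A` w.r.t. the j-graph `B`. -/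
def dens (W : Finset V) (cr : Finset (Finset V)) (j : ℕ) (A B : Finset (Finset V)) : ℝ :=
  if (KsetC W cr j (j+1) B).card = 0 then 0
  else ((A ∩ KsetC W cr j (j+1) B).card : ℝ) / ((KsetC W cr j (j+1) B).card : ℝ)

/-- `H` is a k-graph on the vertex set `W`. -/
def IsKGraph (W : Finset V) (k : ℕ) (H : Finset (Finset V)) : Prop :=
  ∀ e ∈ H, e ⊆ W ∧ e.card = k

/-- symmetric difference of two hypergraphs -/
def sd (A B : Finset (Finset V)) : Finset (Finset V) := (A \ B) ∪ (B \ A)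

/-- A (candidate) family of partitions: the ground set, the class of each vertex and,
for each level `j ≥ 2`, the class of each crossing j-set. -/
structure PartFam (V : Type*) [DecidableEq V] where
  gnd : Finset V
  vClass : V → Finset V
  cls : ℕ → Finset V → Finset (Finset V)

namespace PartFam

variable (F : PartFam V)

/-- crossing i-sets -/
def cross (i : ℕ) : Finset (Finset V) :=
  (F.gnd.powersetCard i).filter fun S =>
    ∀ u ∈ S, ∀ v ∈ S, u ≠ v → F.vClass u ≠ F.vClass v

/-- the level-j polyad of a vertex set `J` -/
def polyad (j : ℕ) (J : Finset V) : Finset (Finset V) :=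
  if j = 1 then sing (J.sup F.vClass) else (J.powersetCard j).sup (F.cls j)

/-- the clique set `K_j(P̂^{(j-1)}(J))` of the (j−1)-polyad of a crossing j-set `J` -/
def polyCliques (j : ℕ) (J : Finset V) : Finset (Finset V) :=
  KsetC F.gnd (F.cross j) (j-1) j (F.polyad (j-1) J)

/-- `F` is a family of partitions `P(k−1, a)`. -/
def IsFamily (k : ℕ) (a : ℕ → ℕ) : Prop :=
  (∀ v ∈ F.gnd, v ∈ F.vClass v) ∧
  (∀ v ∈ F.gnd, F.vClass v ⊆ F.gnd) ∧
  (∀ u ∈ F.gnd, ∀ v ∈ F.gnd, u ∈ F.vClass v → F.vClass u = F.vClass v) ∧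
  (F.gnd.image F.vClass).card = a 1 ∧ k ≤ a 1 ∧
  ∀ j, 2 ≤ j → j ≤ k - 1 →
    (∀ J ∈ F.cross j, J ∈ F.cls j J) ∧
    (∀ J ∈ F.cross j, ∀ I ∈ F.cls j J, F.cls j I = F.cls j J) ∧
    (∀ J ∈ F.cross j, F.cls j J ⊆ F.polyCliques j J) ∧
    (∀ J ∈ F.cross j, F.polyCliques j J ⊆ F.cross j) ∧
    (∀ J ∈ F.cross j, ((F.polyCliques j J).image (F.cls j)).card = a j)

/-- the regularity condition in the definition of an equitable family of partitions:
all polyad complexes of crossing k-sets are (ε, (1/a_2, …, 1/a_{k−1}))-regular. -/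
def PolyadReg (k : ℕ) (a : ℕ → ℕ) (ε : ℝ) : Prop :=
  ∀ K ∈ F.cross k, ∀ j, 2 ≤ j → j ≤ k - 1 → ∀ J ∈ K.powersetCard j,
    RegPairC F.gnd (F.cross j) (j-1) ε (1 / (a j : ℝ)) (F.polyad j K) (F.polyad (j-1) J)

/-- `(η, ε, a, λ)`-equitable family of partitions -/
def IsEquitable (k : ℕ) (a : ℕ → ℕ) (η ε lam : ℝ) : Prop :=
  1 ≤ η * (a 1 : ℝ) ∧
  (∀ v ∈ F.gnd, |((F.vClass v).card : ℝ) - (F.gnd.card : ℝ) / (a 1 : ℝ)|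
      ≤ lam * (F.gnd.card : ℝ) / (a 1 : ℝ)) ∧
  F.PolyadReg k a ε

/-- `(η, ε, a)`-equitable family of partitions (classes of size ⌊n/a₁⌋ or ⌊n/a₁⌋+1) -/
def IsEquitableE (k : ℕ) (a : ℕ → ℕ) (η ε : ℝ) : Prop :=
  1 ≤ η * (a 1 : ℝ) ∧
  (∀ v ∈ F.gnd, (F.vClass v).card = F.gnd.card / a 1 ∨
      (F.vClass v).card = F.gnd.card / a 1 + 1) ∧
  F.PolyadReg k a ε

/-- `G` is perfectly ε-regular with respect to `F`. -/
def PerfectlyRegular (k : ℕ) (ε : ℝ) (G : Finset (Finset V)) : Prop :=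
  ∀ K ∈ F.cross k, ∃ d : ℝ, 0 ≤ d ∧
    RegPairC F.gnd (F.cross k) (k-1) ε d G (F.polyad (k-1) K)

end PartFam

/-- `a` is a T-bounded vector of length k−1. -/
def BoundedVec (k T : ℕ) (a : ℕ → ℕ) : Prop := ∀ j, 1 ≤ j → j ≤ k - 1 → a j ≤ T

/-- level-j refinement `F^{(j)} ≺ P^{(j)}` between two families of partitions -/
def RefinesAt (F P : PartFam V) (j : ℕ) : Prop :=
  if j = 1 then ∀ v ∈ F.gnd, F.vClass v ⊆ P.vClass v
  else ∀ I ∈ F.cross j,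
    (∃ J ∈ P.cross j, F.cls j I ⊆ P.cls j J) ∨ ∀ S ∈ F.cls j I, S ∉ P.cross j

/-- level-j approximate refinement `F^{(j)} ≺_ν P^{(j)}` -/
def RefinesApproxAt (F P : PartFam V) (j : ℕ) (ν : ℝ) : Prop :=
  if j = 1 then
    ∃ f : Finset V → Finset V,
      (∀ v ∈ F.gnd, f (F.vClass v) ∈ F.gnd.image P.vClass) ∧
      ∑ C ∈ F.gnd.image F.vClass, ((C \ f C).card : ℝ) ≤ ν * (F.gnd.card : ℝ)
  else
    ∃ f : Finset (Finset V) → Finset (Finset V),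
      (∀ I ∈ F.cross j,
        f (F.cls j I) ∈ ((P.cross j).image (P.cls j)) ∪ {F.cross j \ P.cross j}) ∧
      ∑ C ∈ (F.cross j).image (F.cls j), ((C \ f C).card : ℝ) ≤ ν * ((F.cross j).card : ℝ)

/-- The address space: a base set (of class indices) together with a labelling of its subsets. -/
abbrev Addr := Finset ℕ × (Finset ℕ → ℕ)

/-- `x` is an element of the address space `Â(l, j, a)`. -/
def IsAddress (l j : ℕ) (a : ℕ → ℕ) (x : Addr) : Prop :=
  x.1.card = l ∧ (∀ i ∈ x.1, 1 ≤ i ∧ i ≤ a 1) ∧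
  (∀ L : Finset ℕ, L ⊆ x.1 → 2 ≤ L.card → L.card ≤ j → 1 ≤ x.2 L ∧ x.2 L ≤ a L.card) ∧
  (∀ L : Finset ℕ, ¬(L ⊆ x.1 ∧ 2 ≤ L.card ∧ L.card ≤ j) → x.2 L = 0)

/-- restriction `ŷ ≤ x̂` of an address to the base `B`, keeping levels up to `j`. -/
def restrictA (x : Addr) (j : ℕ) (B : Finset ℕ) : Addr :=
  (B, fun L => if L ⊆ B ∧ 2 ≤ L.card ∧ L.card ≤ j then x.2 L else 0)

/-- `d` is a density function of `Â(k, k−1, a)`. -/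
def DensityFun (k : ℕ) (a : ℕ → ℕ) (d : Addr → ℝ) : Prop :=
  ∀ x : Addr, IsAddress k (k-1) a x → 0 ≤ d x ∧ d x ≤ 1

/-- A family of partitions together with an `a`-labelling. -/
structure LabFam (V : Type*) [DecidableEq V] extends PartFam V where
  vIdx : V → ℕ
  lbl : ℕ → Finset V → ℕ

namespace LabFam

variable (F : LabFam V)

/-- `F` is a family of partitions with a legitimate `a`-labelling. -/
def IsLabeled (k : ℕ) (a : ℕ → ℕ) : Prop :=
  F.toPartFam.IsFamily k a ∧
  (∀ v ∈ F.gnd, 1 ≤ F.vIdx v ∧ F.vIdx v ≤ a 1) ∧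
  (∀ u ∈ F.gnd, ∀ v ∈ F.gnd, (F.vIdx u = F.vIdx v ↔ F.vClass u = F.vClass v)) ∧
  ∀ j, 2 ≤ j → j ≤ k - 1 →
    (∀ I ∈ F.toPartFam.cross j, 1 ≤ F.lbl j I ∧ F.lbl j I ≤ a j) ∧
    (∀ I ∈ F.toPartFam.cross j, ∀ I' ∈ F.cls j I, F.lbl j I' = F.lbl j I) ∧
    (∀ I ∈ F.toPartFam.cross j, ∀ I' ∈ F.toPartFam.cross j,
      F.toPartFam.polyad (j-1) I = F.toPartFam.polyad (j-1) I' →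
      F.lbl j I = F.lbl j I' → F.cls j I = F.cls j I')

/-- the address `x̂(L)` (up to level j) of a crossing set `L` -/
def addrOf (j : ℕ) (L : Finset V) : Addr :=
  (L.image F.vIdx,
   fun M => if M ⊆ L.image F.vIdx ∧ 2 ≤ M.card ∧ M.card ≤ j
     then F.lbl M.card (L.filter fun v => F.vIdx v ∈ M) else 0)

/-- the part `P^{(j)}(x̂, b)` -/
def partAt (j : ℕ) (x : Addr) (b : ℕ) : Finset (Finset V) :=
  if j ≤ 1 then (if x.1 = {b} then sing (F.gnd.filter fun v => F.vIdx v = b) else ∅)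
  else (F.toPartFam.cross j).filter fun I => F.addrOf (j-1) I = x ∧ F.lbl j I = b

/-- the polyad `P̂^{(j)}(x̂)` -/
def polyAt (j : ℕ) (x : Addr) : Finset (Finset V) :=
  if j = 1 then sing (F.gnd.filter fun v => F.vIdx v ∈ x.1)
  else (x.1.powersetCard j).sup fun B => F.partAt j (restrictA x (j-1) B) (x.2 B)

/-- `F` is an `(ε, d)`-partition of `H`. -/
def IsDensPartition (k : ℕ) (a : ℕ → ℕ) (ε : ℝ) (d : Addr → ℝ)
    (H : Finset (Finset V)) : Prop :=
  ∀ x : Addr, IsAddress k (k-1) a x →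
    RegPairC F.gnd (F.toPartFam.cross k) (k-1) ε (d x) H (F.polyAt (k-1) x)

/-- `F` is an `(ε, a, d)`-equitable partition of `H`. -/
def IsEquitPartition (k : ℕ) (a : ℕ → ℕ) (ε : ℝ) (d : Addr → ℝ)
    (H : Finset (Finset V)) : Prop :=
  F.IsLabeled k a ∧ F.toPartFam.IsEquitableE k a (1 / (a 1 : ℝ)) ε ∧
  F.IsDensPartition k a ε d H

end LabFam

/-- An ℓ-partite complex: vertex classes and, for each level, a partite graph. -/
structure Cx (V : Type*) [DecidableEq V] (l : ℕ) where
  C : Fin l → Finset V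
  G : ℕ → Finset (Finset V)

namespace Cx

variable {l : ℕ} (X : Cx V l)

def gnd : Finset V := Finset.univ.sup X.C

/-- crossing i-sets with respect to the classes of `X` -/
def cross (i : ℕ) : Finset (Finset V) :=
  (X.gnd.powersetCard i).filter fun S => ∀ t : Fin l, (S ∩ X.C t).card ≤ 1

/-- restriction of the level-j graph to the classes indexed by `L` -/
def restr (j : ℕ) (L : Finset (Fin l)) : Finset (Finset V) :=
  if j = 1 then sing (L.sup X.C) else (X.G j).filter fun e => e ⊆ L.sup X.C

/-- `X` is a complex with levels up to `k`. -/
def IsComplex (k : ℕ) : Prop :=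
  (∀ s t : Fin l, s ≠ t → Disjoint (X.C s) (X.C t)) ∧
  (∀ j, 2 ≤ j → j ≤ k → X.G j ⊆ X.cross j) ∧
  (∀ j, 3 ≤ j → j ≤ k → X.G j ⊆ Kset X.gnd (j-1) j (X.G (j-1)))

/-- `X` is an (ε, (d_2, …, d_k))-regular complex. -/
def IsRegular (k : ℕ) (ε : ℝ) (d : ℕ → ℝ) : Prop :=
  ∀ j, 2 ≤ j → j ≤ k → ∀ L ∈ (Finset.univ : Finset (Fin l)).powersetCard j,
    RegPairC X.gnd (X.cross j) (j-1) ε (d j) (X.G j) (X.restr (j-1) L)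

/-- The restricted complex `X[L]` is (ε, (d_2, …, d_{k−1}, p))-regular. -/
def RestrRegular (k : ℕ) (ε : ℝ) (d : ℕ → ℝ) (L : Finset (Fin l)) (p : ℝ) : Prop :=
  ∀ j, 2 ≤ j → j ≤ k → ∀ L' ∈ L.powersetCard j,
    RegPairC X.gnd (X.cross j) (j-1) ε (if j = k then p else d j)
      (X.restr j L) (X.restr (j-1) L')

/-- clique set `K_i` of the level-j graph of the complex (level 1: crossing sets). -/
def KsetLvl (j i : ℕ) : Finset (Finset V) :=
  if j ≤ 1 then X.cross i else Kset X.gnd j i (X.G j)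

end Cx

/-- `eCL`, `mCL` satisfy the counting lemma of Kohayakawa–Rödl–Skokan. -/
def CountingProp (eCL : ℝ → ℝ → ℕ → ℕ → ℝ) (mCL : ℝ → ℝ → ℕ → ℕ → ℕ) : Prop :=
  ∀ γ d₀ : ℝ, 0 < γ → 0 < d₀ → ∀ k l : ℕ, 2 ≤ k → k ≤ l →
    (0 < eCL γ d₀ k l ∧ eCL γ d₀ k l ≤ 1) ∧
    ∀ (V₀ : Type) [DecidableEq V₀], ∀ (X : Cx V₀ l) (m : ℕ) (lam ε : ℝ) (d : ℕ → ℝ),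
      0 ≤ lam → lam < 1/4 → 0 < ε → ε ≤ eCL γ d₀ k l → mCL γ d₀ k l ≤ m →
      (∀ j, 2 ≤ j → j ≤ k → d₀ ≤ d j) →
      X.IsComplex k →
      (∀ i, |((X.C i).card : ℝ) - (m : ℝ)| ≤ lam * m) →
      X.IsRegular k ε d →
      |((Kset X.gnd k l (X.G k)).card : ℝ) -
        (∏ j ∈ Finset.Icc 2 k, d j ^ (l.choose j)) * ∏ i, ((X.C i).card : ℝ)|
        ≤ γ * ((∏ j ∈ Finset.Icc 2 k, d j ^ (l.choose j)) * ∏ i, ((X.C i).card : ℝ))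

/-- `eRI` is a legitimate function for defining regularity instances. -/
def GoodERI (eRI : ℕ → ℕ → ℝ) : Prop :=
  (∀ t k : ℕ, 1 ≤ t → 2 ≤ k → 0 < eRI t k ∧ eRI t k ≤ 1) ∧
  (∀ k t t' : ℕ, 1 ≤ t → t ≤ t' → eRI t' k ≤ eRI t k) ∧
  (∀ t k k' : ℕ, 2 ≤ k → k ≤ k' → eRI t k' ≤ eRI t k) ∧
  (∀ k : ℕ, Filter.Tendsto (fun t => eRI t k) Filter.atTop (nhds 0)) ∧
  ∃ (eCL : ℝ → ℝ → ℕ → ℕ → ℝ) (mCL : ℝ → ℝ → ℕ → ℕ → ℕ),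
    CountingProp eCL mCL ∧
    ∀ t k : ℕ, 1 ≤ t → 2 ≤ k →
      eRI t k < eCL (1/(t:ℝ)) (1/(t:ℝ)) (k-1) k / (4 * (t:ℝ) ^ (4^k))

/-- `max_i a_i` over `i ∈ [k−1]` -/
def maxA (k : ℕ) (a : ℕ → ℕ) : ℕ := (Finset.Icc 1 (k-1)).sup a

/-- `(ε, a, d)` is a regularity instance. -/
def RegInstance (eRI : ℕ → ℕ → ℝ) (k : ℕ) (ε : ℝ) (a : ℕ → ℕ) (d : Addr → ℝ) : Prop :=
  2 ≤ k ∧ (∀ j, 1 ≤ j → j ≤ k - 1 → 1 ≤ a j) ∧ 0 < ε ∧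
  ε ≤ eRI (maxA k a) k ∧ DensityFun k a d

section Counting

variable {W : Type} [Fintype W] [DecidableEq W]

/-- `S` spans an induced copy of `Fg` in `H` (both k-graphs). -/
def InducedCopy (Fg : Finset (Finset W)) (H : Finset (Finset V)) (k : ℕ) (S : Finset V) :
    Prop :=
  ∃ e : W → V, Function.Injective e ∧ Finset.univ.image e = S ∧
    ∀ A : Finset W, A.card = k → (A.image e ∈ H ↔ A ∈ Fg)

/-- the size of the automorphism group of `Fg` -/
def AutCount (Fg : Finset (Finset W)) : ℕ :=
  Nat.card {π : W ≃ W // ∀ A : Finset W, A.image π ∈ Fg ↔ A ∈ Fg}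

/-- the number `IC_σ(F, H)` of σ-induced copies of `Fg` in the complex `X` -/
def ICosig {l : ℕ} (X : Cx V l) (k : ℕ) (Fg : Finset (Finset W)) (σ : W ≃ Fin l) : ℕ :=
  Set.ncard {e : W → V |
    (∀ v, e v ∈ X.C (σ v)) ∧
    Finset.univ.image e ∈ X.KsetLvl (k-1) l ∧
    ∀ A : Finset W, A.card = k → (A.image e ∈ X.G k ↔ A ∈ Fg)}

/-- `IC(F, d, x̂, σ)` -/
def ICs (Fg : Finset (Finset W)) (k l : ℕ) (a : ℕ → ℕ) (d : Addr → ℝ)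
    (x : Addr) (σ : W → ℕ) : ℝ :=
  (∏ B ∈ x.1.powersetCard k,
    if ∃ A ∈ Fg, A.image σ = B then d (restrictA x (k-1) B)
    else 1 - d (restrictA x (k-1) B)) *
  ∏ j ∈ Finset.Icc 2 (k-1), ((a j : ℝ) ^ (l.choose j))⁻¹

/-- `IC(F, d, x̂)` -/
def ICa (Fg : Finset (Finset W)) (k l : ℕ) (a : ℕ → ℕ) (d : Addr → ℝ) (x : Addr) : ℝ :=
  (AutCount Fg : ℝ)⁻¹ *
    ∑ᶠ σ ∈ {σ : W → ℕ | Set.BijOn σ Set.univ ↑x.1}, ICs Fg k l a d x σ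

/-- `IC(F, d)` -/
def IC (Fg : Finset (Finset W)) (k l : ℕ) (a : ℕ → ℕ) (d : Addr → ℝ) : ℝ :=
  (((a 1).choose l : ℝ))⁻¹ * ∑ᶠ x ∈ {x : Addr | IsAddress l (k-1) a x}, ICa Fg k l a d x

end Counting

end

end HypReg
namespace HypReg

open Finset

attribute [local instance 10] Classical.propDecidable

noncomputable section ICML

variable {V : Type} [DecidableEq V] {l : ℕ} {W : Type} [Fintype W] [DecidableEq W]

/-- ℕ: choose is at most pow. -/
lemma nat_choose_le_pow (r n : ℕ) : n.choose r ≤ n ^ r := by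
  induction n generalizing r with
  | zero =>
    cases r with
    | zero => simp
    | succ r => simp [Nat.choose_eq_zero_of_lt]
  | succ n ih =>
    cases r with
    | zero => simp
    | succ r =>
      rw [Nat.choose_succ_succ]
      calc n.choose r + n.choose (r+1) ≤ n ^ r + n * n ^ r := by
            refine Nat.add_le_add (ih r) ?_
            calc n.choose (r+1) ≤ n ^ (r+1) := ih (r+1)
            _ = n * n ^ r := by ring
      _ = (n + 1) * n ^ r := by ring
      _ ≤ (n + 1) * (n + 1) ^ r := Nat.mul_le_mul_left _ (Nat.pow_le_pow_left (by omega) r)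
      _ = (n+1) ^ (r+1) := by ring

lemma mem_sing_iff {U : Finset V} {v : V} : ({v} : Finset V) ∈ sing U ↔ v ∈ U := by
  unfold sing
  constructor
  · intro h
    obtain ⟨w, hw, hv⟩ := Finset.mem_image.mp h
    have : w = v := by
      have := Finset.mem_singleton.mp (hv ▸ Finset.mem_singleton_self w)
      exact this
    exact this ▸ hw
  · intro h; exact Finset.mem_image.mpr ⟨v, h, rfl⟩

/-- the set of class-respecting maps -/
def FFc (X : Cx V l) (σ : W ≃ Fin l) : Finset (W → V) :=
  Fintype.piFinset fun v => X.C (σ v)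

/-- maps whose image is a clique of the (k-1)-th level and contains the k-edges indexed by J -/
def NJs (X : Cx V l) (σ : W ≃ Fin l) (k : ℕ) (J : Finset (Finset W)) : Finset (W → V) :=
  (FFc X σ).filter fun e =>
    Finset.univ.image e ∈ X.KsetLvl (k-1) l ∧ ∀ A ∈ J, Finset.image e A ∈ X.G k

section Basics

variable {X : Cx V l} {σ : W ≃ Fin l} {e : W → V}

lemma mem_FFc : e ∈ FFc X σ ↔ ∀ v, e v ∈ X.C (σ v) := Fintype.mem_piFinset

lemma class_of_eq (hdisj : ∀ s t : Fin l, s ≠ t → Disjoint (X.C s) (X.C t))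
    (he : e ∈ FFc X σ) {w : W} {t : Fin l} (h : e w ∈ X.C t) : σ w = t := by
  by_contra hne
  exact (Finset.disjoint_left.mp (hdisj _ _ hne)) (mem_FFc.mp he w) h

lemma FFc_inj (hdisj : ∀ s t : Fin l, s ≠ t → Disjoint (X.C s) (X.C t))
    (he : e ∈ FFc X σ) : Function.Injective e := by
  intro v w h
  have h1 : e w ∈ X.C (σ v) := h ▸ mem_FFc.mp he v
  have := class_of_eq hdisj he h1
  exact σ.injective this.symm

lemma image_sub_gnd (he : e ∈ FFc X σ) : Finset.univ.image e ⊆ X.gnd := by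
  intro x hx
  obtain ⟨v, _, rfl⟩ := Finset.mem_image.mp hx
  exact Finset.mem_sup.mpr ⟨σ v, Finset.mem_univ _, mem_FFc.mp he v⟩

lemma image_card_eq (hW : Fintype.card W = l)
    (hdisj : ∀ s t : Fin l, s ≠ t → Disjoint (X.C s) (X.C t))
    (he : e ∈ FFc X σ) : (Finset.univ.image e).card = l := by
  rw [Finset.card_image_of_injective _ (FFc_inj hdisj he), Finset.card_univ, hW]

lemma mem_class_unique (hdisj : ∀ s t : Fin l, s ≠ t → Disjoint (X.C s) (X.C t))
    (he : e ∈ FFc X σ) {x : V} {t : Fin l} {A : Finset W}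
    (hx : x ∈ A.image e) (hxt : x ∈ X.C t) {w : W} (hw : w ∈ A) (hwt : σ w = t) :
    x = e w := by
  obtain ⟨w', _, rfl⟩ := Finset.mem_image.mp hx
  have h1 : σ w' = t := class_of_eq hdisj he hxt
  have : w' = w := σ.injective (h1.trans hwt.symm)
  rw [this]

lemma image_inter_class_le (hdisj : ∀ s t : Fin l, s ≠ t → Disjoint (X.C s) (X.C t))
    (he : e ∈ FFc X σ) (A : Finset W) (t : Fin l) :
    ((A.image e) ∩ X.C t).card ≤ 1 := by
  refine Finset.card_le_one.mpr ?_
  intro a ha b hb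
  obtain ⟨ha1, ha2⟩ := Finset.mem_inter.mp ha
  obtain ⟨hb1, hb2⟩ := Finset.mem_inter.mp hb
  obtain ⟨v, hv, rfl⟩ := Finset.mem_image.mp ha1
  obtain ⟨w, hw, rfl⟩ := Finset.mem_image.mp hb1
  have h1 := class_of_eq hdisj he ha2
  have h2 := class_of_eq hdisj he hb2
  exact congrArg e (σ.injective (h1.trans h2.symm))

lemma image_cross (hW : Fintype.card W = l)
    (hdisj : ∀ s t : Fin l, s ≠ t → Disjoint (X.C s) (X.C t))
    (he : e ∈ FFc X σ) : Finset.univ.image e ∈ X.cross l := by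
  unfold Cx.cross
  rw [Finset.mem_filter, Finset.mem_powersetCard]
  exact ⟨⟨image_sub_gnd he, image_card_eq hW hdisj he⟩,
    fun t => image_inter_class_le hdisj he _ t⟩

end Basics


section Chars

variable {X : Cx V l} {σ : W ≃ Fin l} {e : W → V} {k : ℕ}

lemma sup_sub_gnd {X : Cx V l} {L : Finset (Fin l)} : L.sup X.C ⊆ X.gnd := by
  unfold Cx.gnd
  exact Finset.le_iff_subset.mp (Finset.sup_mono (Finset.subset_univ L))

lemma skel_iff (hk2 : 2 ≤ k) (hW : Fintype.card W = l)
    (hdisj : ∀ s t : Fin l, s ≠ t → Disjoint (X.C s) (X.C t)) (he : e ∈ FFc X σ) :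
    Finset.univ.image e ∈ X.KsetLvl (k-1) l ↔
      (∀ P ⊆ Finset.univ.image e, P.card = k-1 → 3 ≤ k → P ∈ X.G (k-1)) := by
  unfold Cx.KsetLvl
  rcases Nat.lt_or_ge k 3 with h3 | h3
  · rw [if_pos (by omega)]
    refine iff_of_true (image_cross hW hdisj he) ?_
    intro P _ _ h
    omega
  · rw [if_neg (by omega)]
    unfold Kset
    rw [Finset.mem_filter, Finset.mem_powersetCard]
    constructor
    · rintro ⟨_, h⟩ P hP hPc _
      exact h P (Finset.mem_powersetCard.mpr ⟨hP, hPc⟩)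
    · intro h
      refine ⟨⟨image_sub_gnd he, image_card_eq hW hdisj he⟩, fun T hT => ?_⟩
      obtain ⟨h1, h2⟩ := Finset.mem_powersetCard.mp hT
      exact h T h1 h2 h3

lemma mem_KsetC_top_iff (hk2 : 2 ≤ k) (hcx : X.IsComplex k) {L : Finset (Fin l)}
    {Q : Finset (Finset V)} (hQ : Q ⊆ X.restr (k-1) L) {S : Finset V} :
    S ∈ KsetC X.gnd (X.cross k) (k-1) k Q ↔
      (S ⊆ L.sup X.C ∧ (∀ t, (S ∩ X.C t).card ≤ 1) ∧ S.card = k ∧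
        ∀ P ⊆ S, P.card = k - 1 → P ∈ Q) := by
  unfold KsetC
  rcases Nat.lt_or_ge k 3 with h3 | h3
  · have hk : k = 2 := by omega
    subst hk
    rw [if_pos rfl]
    have hQ' : Q ⊆ sing (L.sup X.C) := by
      unfold Cx.restr at hQ; rwa [if_pos rfl] at hQ
    rw [Finset.mem_filter]
    unfold Cx.cross
    rw [Finset.mem_filter, Finset.mem_powersetCard]
    constructor
    · rintro ⟨⟨⟨hsub, hcard⟩, hcr⟩, hQv⟩
      refine ⟨?_, hcr, hcard, ?_⟩
      · intro v hv
        exact mem_sing_iff.mp (hQ' (hQv v hv))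
      · intro P hP hPc
        obtain ⟨a, rfl⟩ := Finset.card_eq_one.mp hPc
        exact hQv a (hP (Finset.mem_singleton_self a))
    · rintro ⟨hsub, hcr, hcard, hall⟩
      refine ⟨⟨⟨hsub.trans sup_sub_gnd, hcard⟩, hcr⟩, ?_⟩
      intro v hv
      exact hall {v} (Finset.singleton_subset_iff.mpr hv) (Finset.card_singleton v)
  · rw [if_neg (by omega)]
    unfold Kset
    rw [Finset.mem_filter, Finset.mem_powersetCard]
    have hQ' : ∀ P ∈ Q, P ∈ X.G (k-1) ∧ P ⊆ L.sup X.C := by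
      intro P hP
      have h := hQ hP
      unfold Cx.restr at h
      rw [if_neg (by omega)] at h
      exact ⟨(Finset.mem_filter.mp h).1, (Finset.mem_filter.mp h).2⟩
    constructor
    · rintro ⟨⟨hsub, hcard⟩, hall⟩
      have hall' : ∀ P ⊆ S, P.card = k - 1 → P ∈ Q := fun P hP hPc =>
        hall P (Finset.mem_powersetCard.mpr ⟨hP, hPc⟩)
      refine ⟨?_, ?_, hcard, hall'⟩
      · intro v hv
        obtain ⟨P, hP1, hP2, hP3⟩ := Finset.exists_subsuperset_card_eq (n := k-1)
          (Finset.singleton_subset_iff.mpr hv) (by rw [Finset.card_singleton]; omega)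
          (by rw [hcard]; omega)
        exact (hQ' P (hall' P hP2 hP3)).2 (hP1 (Finset.mem_singleton_self v))
      · intro t
        by_contra hc
        push_neg at hc
        obtain ⟨u, hu, w, hw, huw⟩ := Finset.one_lt_card.mp hc
        have huS := (Finset.mem_inter.mp hu).1
        have hwS := (Finset.mem_inter.mp hw).1
        obtain ⟨P, hP1, hP2, hP3⟩ := Finset.exists_subsuperset_card_eq (n := k-1)
          (show ({u, w} : Finset V) ⊆ S by
            intro x hx
            rcases Finset.mem_insert.mp hx with rfl | hx
            · exact huS
            · exact (Finset.mem_singleton.mp hx) ▸ hwS)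
          (by rw [Finset.card_insert_of_notMem (by simp [huw]), Finset.card_singleton]; omega)
          (by rw [hcard]; omega)
        have hPG : P ∈ X.G (k-1) := (hQ' P (hall' P hP2 hP3)).1
        have hPcr : P ∈ X.cross (k-1) := hcx.2.1 (k-1) (by omega) (by omega) hPG
        have := (Finset.mem_filter.mp hPcr).2 t
        have h2 : 1 < (P ∩ X.C t).card := by
          refine Finset.one_lt_card.mpr ⟨u, ?_, w, ?_, huw⟩
          · exact Finset.mem_inter.mpr ⟨hP1 (by simp), (Finset.mem_inter.mp hu).2⟩
          · exact Finset.mem_inter.mpr ⟨hP1 (by simp), (Finset.mem_inter.mp hw).2⟩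
        omega
    · rintro ⟨hSL, hcr, hcard, hall⟩
      refine ⟨⟨hSL.trans sup_sub_gnd, hcard⟩, fun T hT => ?_⟩
      obtain ⟨h1, h2⟩ := Finset.mem_powersetCard.mp hT
      exact hall T h1 h2

lemma KsetC_subset_sup {j : ℕ} (hj2 : 2 ≤ j) {M : Finset (Fin l)} {cr Q : Finset (Finset V)}
    (hQ : Q ⊆ X.restr (j-1) M) {S : Finset V}
    (hS : S ∈ KsetC X.gnd cr (j-1) j Q) : S ⊆ M.sup X.C := by
  unfold KsetC at hS
  rcases Nat.lt_or_ge j 3 with h3 | h3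
  · have hj : j = 2 := by omega
    subst hj
    rw [if_pos rfl] at hS
    have hQ' : Q ⊆ sing (M.sup X.C) := by
      unfold Cx.restr at hQ; rwa [if_pos rfl] at hQ
    intro v hv
    exact mem_sing_iff.mp (hQ' ((Finset.mem_filter.mp hS).2 v hv))
  · rw [if_neg (by omega)] at hS
    unfold Kset at hS
    rw [Finset.mem_filter, Finset.mem_powersetCard] at hS
    intro v hv
    obtain ⟨P, hP1, hP2, hP3⟩ := Finset.exists_subsuperset_card_eq (n := j-1)
      (Finset.singleton_subset_iff.mpr hv) (by rw [Finset.card_singleton]; omega)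
      (by rw [hS.1.2]; omega)
    have hPQ := hS.2 P (Finset.mem_powersetCard.mpr ⟨hP2, hP3⟩)
    have hres := hQ hPQ
    unfold Cx.restr at hres
    rw [if_neg (by omega)] at hres
    exact (Finset.mem_filter.mp hres).2 (hP1 (Finset.mem_singleton_self v))

lemma trans_card_one (hdisj : ∀ s t : Fin l, s ≠ t → Disjoint (X.C s) (X.C t))
    {L : Finset (Fin l)} {S : Finset V} (hS : S ⊆ L.sup X.C)
    (hcr : ∀ t, (S ∩ X.C t).card ≤ 1) (hcard : S.card = L.card) :
    ∀ t ∈ L, (S ∩ X.C t).card = 1 := by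
  have hbi : S = L.biUnion fun t => S ∩ X.C t := by
    apply Finset.Subset.antisymm
    · intro v hv
      have h := hS hv
      rw [Finset.sup_eq_biUnion, Finset.mem_biUnion] at h
      obtain ⟨t, ht, hvt⟩ := h
      exact Finset.mem_biUnion.mpr ⟨t, ht, Finset.mem_inter.mpr ⟨hv, hvt⟩⟩
    · intro v hv
      obtain ⟨t, _, hvt⟩ := Finset.mem_biUnion.mp hv
      exact (Finset.mem_inter.mp hvt).1
  have hdisj' : ∀ t₁ ∈ L, ∀ t₂ ∈ L, t₁ ≠ t₂ → Disjoint (S ∩ X.C t₁) (S ∩ X.C t₂) :=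
    fun t₁ _ t₂ _ hne =>
      ((hdisj t₁ t₂ hne).mono Finset.inter_subset_right Finset.inter_subset_right)
  have hsum : ∑ t ∈ L, (S ∩ X.C t).card = L.card := by
    rw [← Finset.card_biUnion hdisj', ← hbi, hcard]
  by_contra hc
  push_neg at hc
  obtain ⟨t₀, ht₀, hne⟩ := hc
  have hlt : ∑ t ∈ L, (S ∩ X.C t).card < ∑ t ∈ L, 1 :=
    Finset.sum_lt_sum (fun t _ => hcr t) ⟨t₀, ht₀, by have := hcr t₀; omega⟩
  rw [Finset.sum_const, smul_eq_mul, mul_one] at hlt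
  omega

end Chars


section Fiber

variable {X : Cx V l} {σ : W ≃ Fin l} {k : ℕ} {A₀ : Finset W} {J : Finset (Finset W)}
variable {c E e : W → V}

/-- replace the values on A₀ by a fixed default -/
def piA (A₀ : Finset W) (c : W → V) (e : W → V) : W → V :=
  fun v => if v ∈ A₀ then c v else e v

lemma piA_mem {v : W} (h : v ∈ A₀) : piA A₀ c e v = c v := by simp [piA, h]

lemma piA_not_mem {v : W} (h : v ∉ A₀) : piA A₀ c e v = e v := by simp [piA, h]

/-- the subgraph of the polyad generated by the fibre of `E` -/
def QEs (X : Cx V l) (σ : W ≃ Fin l) (k : ℕ) (J : Finset (Finset W)) (A₀ : Finset W)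
    (c : W → V) (E : W → V) : Finset (Finset V) :=
  (X.restr (k-1) (A₀.image σ)).filter fun P =>
    ∃ e' ∈ NJs X σ k J, piA A₀ c e' = E ∧ P ⊆ Finset.univ.image e'

lemma QEs_subset : QEs X σ k J A₀ c E ⊆ X.restr (k-1) (A₀.image σ) :=
  Finset.filter_subset _ _

lemma NJs_mem {e : W → V} : e ∈ NJs X σ k J ↔ e ∈ FFc X σ ∧
    Finset.univ.image e ∈ X.KsetLvl (k-1) l ∧ ∀ A ∈ J, Finset.image e A ∈ X.G k := by
  unfold NJs
  rw [Finset.mem_filter]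

lemma NJs_subset_FFc : NJs X σ k J ⊆ FFc X σ := Finset.filter_subset _ _

lemma image_A0_sub_sup (he : e ∈ FFc X σ) : A₀.image e ⊆ (A₀.image σ).sup X.C := by
  intro x hx
  obtain ⟨w, hw, rfl⟩ := Finset.mem_image.mp hx
  exact Finset.mem_sup.mpr ⟨σ w, Finset.mem_image_of_mem _ hw, mem_FFc.mp he w⟩

lemma sub_image_mem_B (hk2 : 2 ≤ k) (hcx : X.IsComplex k) (hW : Fintype.card W = l)
    (he : e ∈ NJs X σ k J) :
    ∀ P ⊆ A₀.image e, P.card = k-1 → P ∈ X.restr (k-1) (A₀.image σ) := by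
  intro P hPsub hPc
  have heF := (NJs_mem.mp he).1
  have hsup : P ⊆ (A₀.image σ).sup X.C := hPsub.trans (image_A0_sub_sup heF)
  unfold Cx.restr
  rcases Nat.lt_or_ge k 3 with h3 | h3
  · rw [if_pos (by omega)]
    have : P.card = 1 := by omega
    obtain ⟨a, rfl⟩ := Finset.card_eq_one.mp this
    exact mem_sing_iff.mpr (hsup (Finset.mem_singleton_self a))
  · rw [if_neg (by omega), Finset.mem_filter]
    have hPuniv : P ⊆ Finset.univ.image e :=
      hPsub.trans (Finset.image_subset_image (Finset.subset_univ A₀))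
    exact ⟨(skel_iff hk2 hW hcx.1 heF).mp (NJs_mem.mp he).2.1 P hPuniv hPc h3, hsup⟩

lemma sub_image_mem_QE (hk2 : 2 ≤ k) (hcx : X.IsComplex k) (hW : Fintype.card W = l)
    (he : e ∈ NJs X σ k J) (hπ : piA A₀ c e = E) :
    ∀ P ⊆ A₀.image e, P.card = k-1 → P ∈ QEs X σ k J A₀ c E := by
  intro P hPsub hPc
  refine Finset.mem_filter.mpr ⟨sub_image_mem_B hk2 hcx hW he P hPsub hPc, e, he, hπ, ?_⟩
  exact hPsub.trans (Finset.image_subset_image (Finset.subset_univ A₀))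

lemma image_A0_mem_K (hk2 : 2 ≤ k) (hcx : X.IsComplex k)
    (hA₀ : A₀.card = k) {Q : Finset (Finset V)}
    (hQ : Q ⊆ X.restr (k-1) (A₀.image σ)) (he : e ∈ NJs X σ k J)
    (hP : ∀ P ⊆ A₀.image e, P.card = k-1 → P ∈ Q) :
    A₀.image e ∈ KsetC X.gnd (X.cross k) (k-1) k Q := by
  have heF := (NJs_mem.mp he).1
  rw [mem_KsetC_top_iff hk2 hcx hQ]
  refine ⟨image_A0_sub_sup heF, fun t => image_inter_class_le hcx.1 heF _ t, ?_, hP⟩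
  rw [Finset.card_image_of_injective _ (FFc_inj hcx.1 heF), hA₀]

lemma NJs_eq_empty (hk2 : 2 ≤ k) (hcx : X.IsComplex k) (hW : Fintype.card W = l)
    (hA₀ : A₀.card = k)
    (hKB : KsetC X.gnd (X.cross k) (k-1) k (X.restr (k-1) (A₀.image σ)) = ∅) :
    NJs X σ k J = ∅ := by
  rw [Finset.eq_empty_iff_forall_notMem]
  intro e he
  have := image_A0_mem_K hk2 hcx hA₀ (le_refl _) he (sub_image_mem_B hk2 hcx hW he)
  rw [hKB] at this
  exact absurd this (Finset.notMem_empty _)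

/-- The key surjectivity: every clique of `QEs` is the image of a fibre element. -/
lemma patch_surj (hk2 : 2 ≤ k) (hW : Fintype.card W = l) (hcx : X.IsComplex k)
    (hA₀ : A₀.card = k) (hA₀J : A₀ ∉ J) (hJk : ∀ A ∈ J, A.card = k)
    (hE : E ∈ (NJs X σ k J).image (piA A₀ c))
    {S : Finset V} (hS : S ∈ KsetC X.gnd (X.cross k) (k-1) k (QEs X σ k J A₀ c E)) :
    ∃ e ∈ NJs X σ k J, piA A₀ c e = E ∧ A₀.image e = S := by
  classical
  obtain ⟨e₀, he₀, hE0⟩ := Finset.mem_image.mp hE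
  have he₀F := (NJs_mem.mp he₀).1
  obtain ⟨hSL, hScr, hScard, hSsub⟩ := (mem_KsetC_top_iff hk2 hcx QEs_subset).mp hS
  have hLcard : (A₀.image σ).card = k := by
    rw [Finset.card_image_of_injective _ σ.injective, hA₀]
  have hone : ∀ t ∈ A₀.image σ, (S ∩ X.C t).card = 1 :=
    trans_card_one hcx.1 hSL hScr (by rw [hScard, hLcard])
  have hpick : ∀ w, w ∈ A₀ → ∃ xx, S ∩ X.C (σ w) = {xx} := fun w hw =>
    Finset.card_eq_one.mp (hone (σ w) (Finset.mem_image_of_mem _ hw))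
  choose xx hxx using hpick
  set e : W → V := fun v => if h : v ∈ A₀ then xx v h else e₀ v with he_def
  have hxS : ∀ w (h : w ∈ A₀), xx w h ∈ S ∧ xx w h ∈ X.C (σ w) := by
    intro w h
    have h1 : xx w h ∈ S ∩ X.C (σ w) := (hxx w h) ▸ Finset.mem_singleton_self _
    exact Finset.mem_inter.mp h1
  have heA : ∀ w (h : w ∈ A₀), e w = xx w h := by
    intro w h; simp only [he_def, dif_pos h]
  have hoff : ∀ v, v ∉ A₀ → e v = e₀ v := by
    intro v h; simp only [he_def, dif_neg h]
  have heF : e ∈ FFc X σ := by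
    rw [mem_FFc]
    intro v
    by_cases h : v ∈ A₀
    · rw [heA v h]; exact (hxS v h).2
    · rw [hoff v h]; exact mem_FFc.mp he₀F v
  have hπ : piA A₀ c e = E := by
    funext v
    by_cases h : v ∈ A₀
    · rw [piA_mem h, ← hE0, piA_mem h]
    · rw [piA_not_mem h, ← hE0, piA_not_mem h, hoff v h]
  have himg : A₀.image e = S := by
    apply Finset.eq_of_subset_of_card_le
    · intro y hy
      obtain ⟨w, hw, rfl⟩ := Finset.mem_image.mp hy
      rw [heA w hw]; exact (hxS w hw).1
    · rw [Finset.card_image_of_injective _ (FFc_inj hcx.1 heF), hA₀, hScard]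
  have himgsplit : ∀ y ∈ Finset.univ.image e, y ∈ S ∨ y ∈ (Finset.univ \ A₀).image e₀ := by
    intro y hy
    obtain ⟨v, _, rfl⟩ := Finset.mem_image.mp hy
    by_cases h : v ∈ A₀
    · left; rw [← himg]; exact Finset.mem_image_of_mem e h
    · right
      rw [hoff v h]
      exact Finset.mem_image_of_mem e₀ (Finset.mem_sdiff.mpr ⟨Finset.mem_univ v, h⟩)
  have hwitness : ∀ P ⊆ S, P.card = k-1 → ∃ e', e' ∈ NJs X σ k J ∧
      P ⊆ Finset.univ.image e' ∧ ∀ v, v ∉ A₀ → e' v = e₀ v := by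
    intro P hP hPc
    obtain ⟨hPB, e', he', hπ', hPe'⟩ := Finset.mem_filter.mp (hSsub P hP hPc)
    refine ⟨e', he', hPe', ?_⟩
    intro v hv
    have h1 : piA A₀ c e' v = e' v := piA_not_mem hv
    have h2 : piA A₀ c e₀ v = e₀ v := piA_not_mem hv
    rw [← h1, hπ', ← hE0, h2]
  have hmix : ∀ P' ⊆ Finset.univ.image e, P'.card = k-1 → 3 ≤ k → P' ∈ X.G (k-1) := by
    intro P' hP' hP'c h3
    by_cases hPS : P' ∩ S = ∅
    · have hsub0 : P' ⊆ Finset.univ.image e₀ := by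
        intro y hy
        rcases himgsplit y (hP' hy) with hyS | hyE
        · exact absurd (Finset.mem_inter.mpr ⟨hy, hyS⟩) (by simp [hPS])
        · exact (Finset.image_subset_image (Finset.subset_univ _)) hyE
      exact (skel_iff hk2 hW hcx.1 he₀F).mp (NJs_mem.mp he₀).2.1 P' hsub0 hP'c h3
    · obtain ⟨P'', hsub1, hsub2, hc2⟩ := Finset.exists_subsuperset_card_eq (n := k-1)
        (Finset.inter_subset_right : P' ∩ S ⊆ S)
        (by
          have := Finset.card_le_card (Finset.inter_subset_left : P' ∩ S ⊆ P')
          omega)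
        (by rw [hScard]; omega)
      obtain ⟨e', he', hPe'', hoff'⟩ := hwitness P'' hsub2 hc2
      have he'F := (NJs_mem.mp he').1
      have hP'e' : P' ⊆ Finset.univ.image e' := by
        intro y hy
        by_cases hyS : y ∈ S
        · exact hPe'' (hsub1 (Finset.mem_inter.mpr ⟨hy, hyS⟩))
        · rcases himgsplit y (hP' hy) with h | h
          · exact absurd h hyS
          · obtain ⟨v, hv, rfl⟩ := Finset.mem_image.mp h
            have hvA : v ∉ A₀ := (Finset.mem_sdiff.mp hv).2
            rw [← hoff' v hvA]
            exact Finset.mem_image_of_mem e' (Finset.mem_univ v)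
      exact (skel_iff hk2 hW hcx.1 he'F).mp (NJs_mem.mp he').2.1 P' hP'e' hP'c h3
  have hskel : Finset.univ.image e ∈ X.KsetLvl (k-1) l :=
    (skel_iff hk2 hW hcx.1 heF).mpr hmix
  have hJcon : ∀ A ∈ J, Finset.image e A ∈ X.G k := by
    intro A hA
    by_cases hAA : A ∩ A₀ = ∅
    · have : Finset.image e A = Finset.image e₀ A := by
        apply Finset.image_congr
        intro v hv
        refine hoff v ?_
        intro hv0
        exact absurd (Finset.mem_inter.mpr ⟨hv, hv0⟩) (by simp [hAA])
      rw [this]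
      exact (NJs_mem.mp he₀).2.2 A hA
    · have hTS : (A ∩ A₀).image e ⊆ S := by
        rw [← himg]
        exact Finset.image_subset_image Finset.inter_subset_right
      have hTcard : ((A ∩ A₀).image e).card ≤ k - 1 := by
        rw [Finset.card_image_of_injective _ (FFc_inj hcx.1 heF)]
        have hAk := hJk A hA
        have hne : A ≠ A₀ := fun h => hA₀J (h ▸ hA)
        have h1 : (A ∩ A₀).card ≤ k := by
          have := Finset.card_le_card (Finset.inter_subset_right : A ∩ A₀ ⊆ A₀)
          omega
        by_contra hcon
        have hcon' : (A ∩ A₀).card = k := by omega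
        have : A ∩ A₀ = A₀ := Finset.eq_of_subset_of_card_le Finset.inter_subset_right
          (by omega)
        have hsub : A₀ ⊆ A := by rw [← this]; exact Finset.inter_subset_left
        exact hne (Finset.eq_of_subset_of_card_le hsub (by omega)).symm
      obtain ⟨P'', hsub1, hsub2, hc2⟩ := Finset.exists_subsuperset_card_eq (n := k-1)
        hTS hTcard (by rw [hScard]; omega)
      obtain ⟨e', he', hPe'', hoff'⟩ := hwitness P'' hsub2 hc2
      have he'F := (NJs_mem.mp he').1
      have : Finset.image e A = Finset.image e' A := by
        apply Finset.image_congr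
        intro v hv
        by_cases hvA : v ∈ A₀
        · have hx : e v ∈ Finset.univ.image e' := by
            refine hPe'' (hsub1 ?_)
            exact Finset.mem_image_of_mem e (Finset.mem_inter.mpr ⟨hv, hvA⟩)
          exact mem_class_unique hcx.1 he'F hx (mem_FFc.mp heF v) (Finset.mem_univ v) rfl
        · rw [hoff v hvA, hoff' v hvA]
      rw [this]
      exact (NJs_mem.mp he').2.2 A hA
  exact ⟨e, NJs_mem.mpr ⟨heF, hskel, hJcon⟩, hπ, himg⟩

end Fiber


section FiberCards

variable {X : Cx V l} {σ : W ≃ Fin l} {k : ℕ} {A₀ : Finset W} {J : Finset (Finset W)}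
variable {c E : W → V}

lemma NJs_insert :
    NJs X σ k (insert A₀ J) = (NJs X σ k J).filter fun e => Finset.image e A₀ ∈ X.G k := by
  ext e
  rw [Finset.mem_filter, NJs_mem, NJs_mem]
  constructor
  · rintro ⟨h1, h2, h3⟩
    exact ⟨⟨h1, h2, fun A hA => h3 A (Finset.mem_insert_of_mem hA)⟩,
      h3 A₀ (Finset.mem_insert_self _ _)⟩
  · rintro ⟨⟨h1, h2, h3⟩, h4⟩
    refine ⟨h1, h2, fun A hA => ?_⟩
    rcases Finset.mem_insert.mp hA with rfl | hA
    · exact h4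
    · exact h3 A hA

lemma fiber_card_base (hk2 : 2 ≤ k) (hW : Fintype.card W = l) (hcx : X.IsComplex k)
    (hA₀ : A₀.card = k) (hA₀J : A₀ ∉ J) (hJk : ∀ A ∈ J, A.card = k)
    (hE : E ∈ (NJs X σ k J).image (piA A₀ c)) :
    ((NJs X σ k J).filter fun e => piA A₀ c e = E).card
      = (KsetC X.gnd (X.cross k) (k-1) k (QEs X σ k J A₀ c E)).card := by
  refine Finset.card_bij (fun e _ => A₀.image e) ?_ ?_ ?_
  · intro e he
    obtain ⟨heJ, heπ⟩ := Finset.mem_filter.mp he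
    exact image_A0_mem_K hk2 hcx hA₀ QEs_subset heJ (sub_image_mem_QE hk2 hcx hW heJ heπ)
  · intro e₁ h₁ e₂ h₂ himg
    obtain ⟨h₁J, h₁π⟩ := Finset.mem_filter.mp h₁
    obtain ⟨h₂J, h₂π⟩ := Finset.mem_filter.mp h₂
    have himg' : A₀.image e₁ = A₀.image e₂ := himg
    funext v
    by_cases hv : v ∈ A₀
    · have hx : e₁ v ∈ A₀.image e₂ := himg' ▸ Finset.mem_image_of_mem e₁ hv
      exact mem_class_unique hcx.1 (NJs_mem.mp h₂J).1 hx
        (mem_FFc.mp (NJs_mem.mp h₁J).1 v) hv rfl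
    · calc e₁ v = piA A₀ c e₁ v := (piA_not_mem hv).symm
      _ = piA A₀ c e₂ v := by rw [h₁π, h₂π]
      _ = e₂ v := piA_not_mem hv
  · intro S hS
    obtain ⟨e, heJ, hπ, himg⟩ := patch_surj hk2 hW hcx hA₀ hA₀J hJk hE hS
    exact ⟨e, Finset.mem_filter.mpr ⟨heJ, hπ⟩, himg⟩

lemma fiber_card_top (hk2 : 2 ≤ k) (hW : Fintype.card W = l) (hcx : X.IsComplex k)
    (hA₀ : A₀.card = k) (hA₀J : A₀ ∉ J) (hJk : ∀ A ∈ J, A.card = k)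
    (hE : E ∈ (NJs X σ k J).image (piA A₀ c)) :
    ((NJs X σ k J).filter fun e => piA A₀ c e = E ∧ Finset.image e A₀ ∈ X.G k).card
      = (X.restr k (A₀.image σ) ∩
          KsetC X.gnd (X.cross k) (k-1) k (QEs X σ k J A₀ c E)).card := by
  have hrestr : ∀ S : Finset V, S ∈ X.restr k (A₀.image σ) ↔
      S ∈ X.G k ∧ S ⊆ (A₀.image σ).sup X.C := by
    intro S
    unfold Cx.restr
    rw [if_neg (by omega), Finset.mem_filter]
  refine Finset.card_bij (fun e _ => A₀.image e) ?_ ?_ ?_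
  · intro e he
    obtain ⟨heJ, heπ, heG⟩ := Finset.mem_filter.mp he
    refine Finset.mem_inter.mpr ⟨(hrestr _).mpr ⟨heG,
      image_A0_sub_sup (NJs_mem.mp heJ).1⟩, ?_⟩
    exact image_A0_mem_K hk2 hcx hA₀ QEs_subset heJ (sub_image_mem_QE hk2 hcx hW heJ heπ)
  · intro e₁ h₁ e₂ h₂ himg
    obtain ⟨h₁J, h₁π, _⟩ := Finset.mem_filter.mp h₁
    obtain ⟨h₂J, h₂π, _⟩ := Finset.mem_filter.mp h₂
    have himg' : A₀.image e₁ = A₀.image e₂ := himg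
    funext v
    by_cases hv : v ∈ A₀
    · have hx : e₁ v ∈ A₀.image e₂ := himg' ▸ Finset.mem_image_of_mem e₁ hv
      exact mem_class_unique hcx.1 (NJs_mem.mp h₂J).1 hx
        (mem_FFc.mp (NJs_mem.mp h₁J).1 v) hv rfl
    · calc e₁ v = piA A₀ c e₁ v := (piA_not_mem hv).symm
      _ = piA A₀ c e₂ v := by rw [h₁π, h₂π]
      _ = e₂ v := piA_not_mem hv
  · intro S hS
    obtain ⟨h1, h2⟩ := Finset.mem_inter.mp hS
    obtain ⟨e, heJ, hπ, himg⟩ := patch_surj hk2 hW hcx hA₀ hA₀J hJk hE h2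
    exact ⟨e, Finset.mem_filter.mpr ⟨heJ, hπ, himg ▸ ((hrestr S).mp h1).1⟩, himg⟩

end FiberCards


section Peel

variable {X : Cx V l} {σ : W ≃ Fin l} {k : ℕ} {A₀ : Finset W} {J : Finset (Finset W)}

lemma abs_sub_le_abs_add_abs (a b : ℝ) : |a - b| ≤ |a| + |b| := by
  calc |a - b| = |a + -b| := by ring_nf
  _ ≤ |a| + |-b| := abs_add_le _ _
  _ = |a| + |b| := by rw [abs_neg]

set_option maxHeartbeats 1000000 in
lemma peel_ineq (hk2 : 2 ≤ k) (hW : Fintype.card W = l) (hcx : X.IsComplex k)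
    {m : ℕ} (hm : 1 ≤ m) (hsize : ∀ i, (X.C i).card = m ∨ (X.C i).card = m + 1)
    {ε pL : ℝ} (hε0 : 0 < ε) (hε1 : ε ≤ 1)
    (hA₀ : A₀.card = k) (hA₀J : A₀ ∉ J) (hJk : ∀ A ∈ J, A.card = k)
    (hreg : RegPairC X.gnd (X.cross k) (k-1) ε pL (X.restr k (A₀.image σ))
      (X.restr (k-1) (A₀.image σ))) :
    |((NJs X σ k (insert A₀ J)).card : ℝ) - pL * ((NJs X σ k J).card : ℝ)|
      ≤ ε * ((NJs X σ k J).card : ℝ) + 3 * ε * ((k:ℝ)^k * 2^l) * (m:ℝ)^l := by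
  classical
  set L := A₀.image σ with hLdef
  set B := X.restr (k-1) L with hBdef
  set KB := KsetC X.gnd (X.cross k) (k-1) k B with hKBdef
  have hkl : k ≤ l := by
    have h1 : A₀.card ≤ (Finset.univ : Finset W).card := Finset.card_le_card (Finset.subset_univ _)
    rw [hA₀, Finset.card_univ, hW] at h1
    exact h1
  have hk1 : k - 1 + 1 = k := by omega
  have hregk : ∀ Q ⊆ B, ε * (KB.card : ℝ) ≤ ((KsetC X.gnd (X.cross k) (k-1) k Q).card : ℝ) →
      |(((X.restr k L ∩ KsetC X.gnd (X.cross k) (k-1) k Q).card : ℝ)) -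
        pL * ((KsetC X.gnd (X.cross k) (k-1) k Q).card : ℝ)|
        ≤ ε * ((KsetC X.gnd (X.cross k) (k-1) k Q).card : ℝ) := by
    intro Q hQ
    have h := hreg Q hQ
    rw [hk1] at h
    exact h
  by_cases hKB0 : KB = ∅
  · rw [NJs_eq_empty hk2 hcx hW hA₀ hKB0 (J := insert A₀ J),
      NJs_eq_empty hk2 hcx hW hA₀ hKB0 (J := J)]
    simp only [Finset.card_empty, Nat.cast_zero, mul_zero, sub_zero, abs_zero]
    positivity
  · have hKBpos : 0 < (KB.card : ℝ) := by
      have := Finset.card_pos.mpr (Finset.nonempty_of_ne_empty hKB0)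
      exact_mod_cast this
  -- bound |pL| ≤ 2
    have hpb : |pL| ≤ 2 := by
      have h := hregk B (fun _ hx => hx) (by nlinarith)
      have h2 : ((X.restr k L ∩ KB).card : ℝ) ≤ (KB.card : ℝ) := by
        exact_mod_cast Finset.card_le_card Finset.inter_subset_right
      have habs : |pL| * (KB.card : ℝ) = |pL * (KB.card : ℝ)| := by
        rw [abs_mul, abs_of_nonneg (le_of_lt hKBpos)]
      have h4 : |pL * (KB.card : ℝ)| ≤ ε * KB.card + KB.card := by
        calc |pL * (KB.card : ℝ)|
            = |(pL * (KB.card:ℝ) - ((X.restr k L ∩ KB).card : ℝ)) +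
                ((X.restr k L ∩ KB).card : ℝ)| := by ring_nf
        _ ≤ |pL * (KB.card:ℝ) - ((X.restr k L ∩ KB).card : ℝ)| +
              |((X.restr k L ∩ KB).card : ℝ)| := abs_add_le _ _
        _ ≤ ε * KB.card + KB.card := by
              refine add_le_add ?_ ?_
              · rw [abs_sub_comm]; exact h
              · rw [abs_of_nonneg (by positivity)]; exact h2
      nlinarith [abs_nonneg pL]
  -- choose defaults
    have hcex : ∀ v : W, ∃ x, x ∈ X.C (σ v) := by
      intro v
      have h := hsize (σ v)
      have : 0 < (X.C (σ v)).card := by omega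
      obtain ⟨x, hx⟩ := Finset.card_pos.mp this
      exact ⟨x, hx⟩
    choose c hc using hcex
    set π := piA A₀ c with hπdef
    set 𝓔 := (NJs X σ k J).image π with h𝓔def
    have hNJ : (NJs X σ k J).card =
        ∑ E ∈ 𝓔, ((NJs X σ k J).filter fun e => π e = E).card :=
      Finset.card_eq_sum_card_fiberwise (fun e he => Finset.mem_image_of_mem π he)
    have hNJ' : (NJs X σ k (insert A₀ J)).card =
        ∑ E ∈ 𝓔, ((NJs X σ k J).filter fun e => π e = E ∧ Finset.image e A₀ ∈ X.G k).card := by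
      rw [NJs_insert]
      rw [Finset.card_eq_sum_card_fiberwise
        (f := π) (t := 𝓔)
        (fun e he => Finset.mem_image_of_mem π (Finset.mem_filter.mp he).1)]
      refine Finset.sum_congr rfl ?_
      intro E _
      rw [Finset.filter_filter]
      exact congrArg Finset.card (Finset.filter_congr fun e _ => by
        constructor
        · rintro ⟨a, b⟩; exact ⟨b, a⟩
        · rintro ⟨a, b⟩; exact ⟨b, a⟩)
    have hperE : ∀ E ∈ 𝓔,
        |(((NJs X σ k J).filter fun e => π e = E ∧ Finset.image e A₀ ∈ X.G k).card : ℝ) -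
          pL * (((NJs X σ k J).filter fun e => π e = E).card : ℝ)|
          ≤ ε * (((NJs X σ k J).filter fun e => π e = E).card : ℝ) + 3 * ε * KB.card := by
      intro E hE
      rw [fiber_card_base hk2 hW hcx hA₀ hA₀J hJk hE,
        fiber_card_top hk2 hW hcx hA₀ hA₀J hJk hE]
      set KQ := KsetC X.gnd (X.cross k) (k-1) k (QEs X σ k J A₀ c E) with hKQdef
      by_cases hth : ε * (KB.card : ℝ) ≤ (KQ.card : ℝ)
      · have h := hregk _ QEs_subset hth
        have h9 : (0:ℝ) ≤ 3*ε*(KB.card:ℝ) := by positivity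
        linarith
      · push_neg at hth
        have h1 : ((X.restr k L ∩ KQ).card : ℝ) ≤ (KQ.card : ℝ) := by
          exact_mod_cast Finset.card_le_card Finset.inter_subset_right
        have h2 : (KQ.card : ℝ) ≤ ε * KB.card := le_of_lt hth
        have h3 := abs_sub_le_abs_add_abs ((X.restr k L ∩ KQ).card : ℝ) (pL * (KQ.card : ℝ))
        have h4 : |((X.restr k L ∩ KQ).card : ℝ)| = ((X.restr k L ∩ KQ).card : ℝ) :=
          abs_of_nonneg (by positivity)
        have h5 : |pL * (KQ.card : ℝ)| ≤ 2 * (KQ.card : ℝ) := by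
          rw [abs_mul, abs_of_nonneg (by positivity : (0:ℝ) ≤ (KQ.card:ℝ))]
          nlinarith [abs_nonneg pL]
        have h6 : (0:ℝ) ≤ ε * ((KQ.card:ℝ)) := by positivity
        linarith
    -- sum everything
    have hsum : |((NJs X σ k (insert A₀ J)).card : ℝ) - pL * ((NJs X σ k J).card : ℝ)|
        ≤ ε * ((NJs X σ k J).card : ℝ) + (𝓔.card : ℝ) * (3 * ε * KB.card) := by
      rw [hNJ, hNJ']
      push_cast
      rw [Finset.mul_sum, ← Finset.sum_sub_distrib]
      refine (Finset.abs_sum_le_sum_abs _ _).trans ?_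
      refine (Finset.sum_le_sum hperE).trans ?_
      rw [Finset.sum_add_distrib, Finset.sum_const, ← Finset.mul_sum, nsmul_eq_mul]
    have hKBle : KB.card ≤ (k * (m+1))^k := by
      have hsub : KB ⊆ (L.sup X.C).powersetCard k := by
        intro S hS
        have hchar := (mem_KsetC_top_iff hk2 hcx (fun _ hx => hx)).mp hS
        exact Finset.mem_powersetCard.mpr ⟨hchar.1, hchar.2.2.1⟩
      have b1 : (L.sup X.C).card ≤ ∑ t ∈ L, (X.C t).card := by
        rw [Finset.sup_eq_biUnion]; exact Finset.card_biUnion_le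
      have b2 : ∑ t ∈ L, (X.C t).card ≤ L.card * (m+1) := by
        calc ∑ t ∈ L, (X.C t).card ≤ ∑ _t ∈ L, (m+1) :=
              Finset.sum_le_sum (fun t _ => by have := hsize t; omega)
        _ = L.card * (m+1) := by rw [Finset.sum_const, smul_eq_mul]
      have b3 : L.card = k := by
        rw [hLdef, Finset.card_image_of_injective _ σ.injective, hA₀]
      calc KB.card ≤ ((L.sup X.C).powersetCard k).card := Finset.card_le_card hsub
      _ = ((L.sup X.C).card).choose k := Finset.card_powersetCard _ _
      _ ≤ ((L.sup X.C).card)^k := nat_choose_le_pow _ _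
      _ ≤ (k * (m+1))^k :=
            Nat.pow_le_pow_left (b1.trans (b2.trans (by rw [b3]))) _
    have h𝓔le : 𝓔.card ≤ (m+1)^(l - k) := by
      have hsub : 𝓔 ⊆ Fintype.piFinset (fun v => if v ∈ A₀ then {c v} else X.C (σ v)) := by
        intro E hE
        obtain ⟨e, he, rfl⟩ := Finset.mem_image.mp hE
        rw [Fintype.mem_piFinset]
        intro v
        by_cases h : v ∈ A₀
        · rw [if_pos h, show π e v = c v from piA_mem h]
          exact Finset.mem_singleton_self _
        · rw [if_neg h, show π e v = e v from piA_not_mem h]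
          exact mem_FFc.mp (NJs_subset_FFc he) v
      calc 𝓔.card ≤ _ := Finset.card_le_card hsub
      _ = ∏ v : W, (if v ∈ A₀ then ({c v} : Finset V) else X.C (σ v)).card :=
            Fintype.card_piFinset _
      _ ≤ ∏ v : W, (if v ∈ A₀ then 1 else (m+1)) := by
            refine Finset.prod_le_prod' ?_
            intro v _
            by_cases h : v ∈ A₀
            · simp [h]
            · simp only [if_neg h]
              have := hsize (σ v); omega
      _ = (m+1)^(l - k) := by
            rw [Finset.prod_ite, Finset.prod_const, Finset.prod_const, one_pow, one_mul]
            congr 1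
            have : Finset.filter (fun v => ¬ v ∈ A₀) Finset.univ = A₀ᶜ := by
              ext v; simp
            rw [this, Finset.card_compl, hA₀, hW]
    have hprod : (𝓔.card : ℝ) * (KB.card : ℝ) ≤ (k:ℝ)^k * 2^l * (m:ℝ)^l := by
      have hm' : (1:ℝ) ≤ (m:ℝ) := by exact_mod_cast hm
      have c1 : (𝓔.card : ℝ) ≤ ((m:ℝ)+1)^(l-k) := by exact_mod_cast h𝓔le
      have c2 : (KB.card : ℝ) ≤ ((k:ℝ) * ((m:ℝ)+1))^k := by exact_mod_cast hKBle
      calc (𝓔.card:ℝ) * KB.card ≤ ((m:ℝ)+1)^(l-k) * ((k:ℝ)*((m:ℝ)+1))^k :=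
            mul_le_mul c1 c2 (by positivity) (by positivity)
      _ = (k:ℝ)^k * (((m:ℝ)+1)^(l-k) * ((m:ℝ)+1)^k) := by rw [mul_pow]; ring
      _ = (k:ℝ)^k * ((m:ℝ)+1)^l := by rw [← pow_add, Nat.sub_add_cancel hkl]
      _ ≤ (k:ℝ)^k * (2*(m:ℝ))^l := by
            refine mul_le_mul_of_nonneg_left
              (pow_le_pow_left₀ (by positivity) (by linarith) l) (by positivity)
      _ = (k:ℝ)^k * 2^l * (m:ℝ)^l := by rw [mul_pow]; ring
    refine hsum.trans ?_
    have heq : (𝓔.card:ℝ) * (3*ε*KB.card) = 3*ε*((𝓔.card:ℝ)*KB.card) := by ring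
    rw [heq]
    have h7 := mul_le_mul_of_nonneg_left hprod (by positivity : (0:ℝ) ≤ 3*ε)
    nlinarith

end Peel


section NJEst

variable {X : Cx V l} {σ : W ≃ Fin l} {k : ℕ}

lemma pL_bound {ε pL : ℝ} (hε0 : 0 < ε) (hε1 : ε ≤ 1) (hk2 : 2 ≤ k) {L : Finset (Fin l)}
    (hKB0 : KsetC X.gnd (X.cross k) (k-1) k (X.restr (k-1) L) ≠ ∅)
    (hreg : RegPairC X.gnd (X.cross k) (k-1) ε pL (X.restr k L) (X.restr (k-1) L)) :
    |pL| ≤ 2 := by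
  set B := X.restr (k-1) L with hBdef
  set KB := KsetC X.gnd (X.cross k) (k-1) k B with hKBdef
  have hk1 : k - 1 + 1 = k := by omega
  have hKBpos : 0 < (KB.card : ℝ) := by
    have := Finset.card_pos.mpr (Finset.nonempty_of_ne_empty hKB0)
    exact_mod_cast this
  have h := hreg B (fun _ hx => hx)
  rw [hk1] at h
  have h := h (by nlinarith)
  have h2 : ((X.restr k L ∩ KB).card : ℝ) ≤ (KB.card : ℝ) := by
    exact_mod_cast Finset.card_le_card Finset.inter_subset_right
  have habs : |pL| * (KB.card : ℝ) = |pL * (KB.card : ℝ)| := by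
    rw [abs_mul, abs_of_nonneg (le_of_lt hKBpos)]
  have h4 : |pL * (KB.card : ℝ)| ≤ ε * KB.card + KB.card := by
    calc |pL * (KB.card : ℝ)|
        = |(pL * (KB.card:ℝ) - ((X.restr k L ∩ KB).card : ℝ)) +
            ((X.restr k L ∩ KB).card : ℝ)| := by ring_nf
    _ ≤ |pL * (KB.card:ℝ) - ((X.restr k L ∩ KB).card : ℝ)| +
          |((X.restr k L ∩ KB).card : ℝ)| := abs_add_le _ _
    _ ≤ ε * KB.card + KB.card := by
          refine add_le_add ?_ ?_
          · rw [abs_sub_comm]; exact h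
          · rw [abs_of_nonneg (by positivity)]; exact h2
  nlinarith [abs_nonneg pL]

lemma FFc_card_le {m : ℕ} (hW : Fintype.card W = l)
    (hsize : ∀ i, (X.C i).card = m ∨ (X.C i).card = m + 1) :
    (FFc X σ).card ≤ (m+1)^l := by
  unfold FFc
  rw [Fintype.card_piFinset]
  calc ∏ v : W, (X.C (σ v)).card ≤ ∏ _v : W, (m+1) :=
        Finset.prod_le_prod' (fun v _ => by have := hsize (σ v); omega)
  _ = (m+1)^l := by rw [Finset.prod_const, Finset.card_univ, hW]

lemma NJs_card_le_real {m : ℕ} (hm : 1 ≤ m) (hW : Fintype.card W = l)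
    (hsize : ∀ i, (X.C i).card = m ∨ (X.C i).card = m + 1) {J : Finset (Finset W)} :
    ((NJs X σ k J).card : ℝ) ≤ 2^l * (m:ℝ)^l := by
  have h1 : (NJs X σ k J).card ≤ (m+1)^l :=
    (Finset.card_le_card NJs_subset_FFc).trans (FFc_card_le hW hsize)
  have hm' : (1:ℝ) ≤ (m:ℝ) := by exact_mod_cast hm
  calc ((NJs X σ k J).card : ℝ) ≤ ((m:ℝ)+1)^l := by exact_mod_cast h1
  _ ≤ (2*(m:ℝ))^l := pow_le_pow_left₀ (by positivity) (by linarith) l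
  _ = 2^l * (m:ℝ)^l := mul_pow _ _ _

set_option maxHeartbeats 1000000 in
lemma NJ_est (hk2 : 2 ≤ k) (hW : Fintype.card W = l) (hcx : X.IsComplex k)
    {m : ℕ} (hm : 1 ≤ m) (hsize : ∀ i, (X.C i).card = m ∨ (X.C i).card = m + 1)
    {ε : ℝ} {p : Finset (Fin l) → ℝ} (hε0 : 0 < ε) (hε1 : ε ≤ 1)
    (hregA : ∀ A : Finset W, A.card = k →
      RegPairC X.gnd (X.cross k) (k-1) ε (p (A.image σ)) (X.restr k (A.image σ))
        (X.restr (k-1) (A.image σ))) :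
    ∀ J : Finset (Finset W), (∀ A ∈ J, A.card = k) →
      |((NJs X σ k J).card : ℝ) - (∏ A ∈ J, p (A.image σ)) * ((NJs X σ k ∅).card : ℝ)|
        ≤ ((3:ℝ)^J.card - 1) * (ε * ((2:ℝ)^l + 3*((k:ℝ)^k * 2^l)) * (m:ℝ)^l) := by
  intro J
  induction J using Finset.induction_on with
  | empty => simp
  | @insert A₀ J hA₀J ih =>
    intro hJk'
    have hA₀ : A₀.card = k := hJk' A₀ (Finset.mem_insert_self _ _)
    have hJk : ∀ A ∈ J, A.card = k := fun A hA => hJk' A (Finset.mem_insert_of_mem hA)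
    rw [Finset.prod_insert hA₀J, Finset.card_insert_of_notMem hA₀J]
    have h3n : (1:ℝ) ≤ 3^J.card := one_le_pow₀ (by norm_num)
    have hC2 : (0:ℝ) ≤ ε * ((2:ℝ)^l + 3*((k:ℝ)^k * 2^l)) * (m:ℝ)^l := by positivity
    by_cases hKB0 : KsetC X.gnd (X.cross k) (k-1) k (X.restr (k-1) (A₀.image σ)) = ∅
    · rw [NJs_eq_empty hk2 hcx hW hA₀ hKB0 (J := insert A₀ J),
        NJs_eq_empty hk2 hcx hW hA₀ hKB0 (J := ∅)]
      simp only [Finset.card_empty, Nat.cast_zero, mul_zero, sub_zero, abs_zero, zero_sub,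
        abs_neg, abs_zero]
      have h3n' : (1:ℝ) ≤ 3^(J.card + 1) := one_le_pow₀ (by norm_num)
      exact mul_nonneg (by linarith) (by positivity)
    · have hpb : |p (A₀.image σ)| ≤ 2 := pL_bound hε0 hε1 hk2 hKB0 (hregA A₀ hA₀)
      have hpeel := peel_ineq hk2 hW hcx hm hsize hε0 hε1 hA₀ hA₀J hJk (hregA A₀ hA₀)
      have hih := ih hJk
      set N' := ((NJs X σ k (insert A₀ J)).card : ℝ) with hN'
      set NJ := ((NJs X σ k J).card : ℝ) with hNJ
      set N0 := ((NJs X σ k ∅).card : ℝ) with hN0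
      set pA := p (A₀.image σ) with hpA
      set Pr := ∏ A ∈ J, p (A.image σ) with hPr
      set D1 := ε * ((2:ℝ)^l * (m:ℝ)^l) with hD1
      set D2 := 3 * ε * ((k:ℝ)^k * 2^l) * (m:ℝ)^l with hD2
      have hsplit : N' - pA * Pr * N0 = (N' - pA * NJ) + pA * (NJ - Pr * N0) := by ring
      have t1 : |N' - pA * Pr * N0| ≤ |N' - pA * NJ| + |pA * (NJ - Pr * N0)| := by
        rw [hsplit]; exact abs_add_le _ _
      have t2 : |pA * (NJ - Pr * N0)| ≤ 2 * (((3:ℝ)^J.card - 1) *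
          (ε * ((2:ℝ)^l + 3*((k:ℝ)^k * 2^l)) * (m:ℝ)^l)) := by
        rw [abs_mul]
        exact mul_le_mul hpb hih (abs_nonneg _) (by norm_num)
      have t3 : ε * NJ ≤ D1 := by
        rw [hD1]
        have := NJs_card_le_real (X := X) (σ := σ) (k := k) (J := J) hm hW hsize
        have h' : ε * NJ ≤ ε * (2^l * (m:ℝ)^l) :=
          mul_le_mul_of_nonneg_left this hε0.le
        exact h'
      have hCeq : ε * ((2:ℝ)^l + 3*((k:ℝ)^k * 2^l)) * (m:ℝ)^l = D1 + D2 := by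
        rw [hD1, hD2]; ring
      have hD12 : (0:ℝ) ≤ D1 + D2 := by rw [hD1, hD2]; positivity
      have t5 : (2*(3:ℝ)^J.card - 1) * (D1 + D2) ≤ ((3:ℝ)^(J.card+1) - 1) * (D1 + D2) := by
        refine mul_le_mul_of_nonneg_right ?_ hD12
        rw [pow_succ]
        nlinarith
      rw [hCeq] at t2 ⊢
      have hpeel' : |N' - pA * NJ| ≤ ε * NJ + D2 := hpeel
      calc |N' - pA * Pr * N0| ≤ (ε * NJ + D2) + 2 * (((3:ℝ)^J.card - 1) * (D1 + D2)) := by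
            linarith
      _ ≤ (D1 + D2) + 2 * (((3:ℝ)^J.card - 1) * (D1 + D2)) := by linarith
      _ = (2*(3:ℝ)^J.card - 1) * (D1 + D2) := by ring
      _ ≤ ((3:ℝ)^(J.card+1) - 1) * (D1 + D2) := t5

end NJEst


section IE

variable {X : Cx V l} {σ : W ≃ Fin l} {k : ℕ}

lemma mem_univA_iff {A : Finset W} : A ∈ (Finset.univ : Finset W).powersetCard k ↔ A.card = k := by
  rw [Finset.mem_powersetCard]
  exact ⟨fun h => h.2, fun h => ⟨Finset.subset_univ _, h⟩⟩

lemma ICosig_eq_card (Fg : Finset (Finset W)) :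
    (ICosig X k Fg σ : ℝ) = (((FFc X σ).filter fun e =>
      Finset.univ.image e ∈ X.KsetLvl (k-1) l ∧
      ∀ A : Finset W, A.card = k → (Finset.image e A ∈ X.G k ↔ A ∈ Fg)).card : ℝ) := by
  unfold ICosig
  have hset : {e : W → V | (∀ v, e v ∈ X.C (σ v)) ∧
      Finset.univ.image e ∈ X.KsetLvl (k-1) l ∧
      ∀ A : Finset W, A.card = k → (Finset.image e A ∈ X.G k ↔ A ∈ Fg)} =
      ↑((FFc X σ).filter fun e =>
        Finset.univ.image e ∈ X.KsetLvl (k-1) l ∧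
        ∀ A : Finset W, A.card = k → (Finset.image e A ∈ X.G k ↔ A ∈ Fg)) := by
    ext e
    simp only [Set.mem_setOf_eq, Finset.coe_filter, mem_FFc]
  rw [hset, Set.ncard_coe_finset]

lemma sum_powerset_neg_one_real {α : Type*} [DecidableEq α] (s : Finset α) :
    ∑ t ∈ s.powerset, (-1:ℝ)^t.card = if s = ∅ then 1 else 0 := by
  induction s using Finset.induction_on with
  | empty => simp
  | @insert a s ha ih =>
    rw [Finset.powerset_insert, Finset.sum_union, Finset.sum_image]
    · have h1 : ∀ t ∈ s.powerset, (-1:ℝ)^(insert a t).card = -(-1:ℝ)^t.card := by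
        intro t ht
        have hat : a ∉ t := fun h => ha (Finset.mem_powerset.mp ht h)
        rw [Finset.card_insert_of_notMem hat, pow_succ]
        ring
      rw [Finset.sum_congr rfl h1, Finset.sum_neg_distrib, ih]
      simp
    · intro t ht u hu h
      have hat : a ∉ t := fun hh => ha (Finset.mem_powerset.mp ht hh)
      have hau : a ∉ u := fun hh => ha (Finset.mem_powerset.mp hu hh)
      have := congrArg (fun z => Finset.erase z a) h
      simpa [Finset.erase_insert hat, Finset.erase_insert hau] using this
    · rw [Finset.disjoint_right]
      intro t ht ht'
      obtain ⟨u, hu, rfl⟩ := Finset.mem_image.mp ht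
      have : a ∈ insert a u := Finset.mem_insert_self _ _
      exact ha (Finset.mem_powerset.mp ht' this)

lemma NJs_union_filter {Fg S : Finset (Finset W)} :
    NJs X σ k (Fg ∪ S) = (NJs X σ k Fg).filter fun e => ∀ A ∈ S, Finset.image e A ∈ X.G k := by
  ext e
  rw [Finset.mem_filter, NJs_mem, NJs_mem]
  constructor
  · rintro ⟨h1, h2, h3⟩
    exact ⟨⟨h1, h2, fun A hA => h3 A (Finset.mem_union_left _ hA)⟩,
      fun A hA => h3 A (Finset.mem_union_right _ hA)⟩
  · rintro ⟨⟨h1, h2, h3⟩, h4⟩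
    refine ⟨h1, h2, fun A hA => ?_⟩
    rcases Finset.mem_union.mp hA with hA | hA
    · exact h3 A hA
    · exact h4 A hA

set_option maxHeartbeats 1000000 in
lemma ICosig_IE {Fg : Finset (Finset W)} (hFg : ∀ A ∈ Fg, A.card = k) :
    (ICosig X k Fg σ : ℝ) =
      ∑ S ∈ ((Finset.univ : Finset W).powersetCard k \ Fg).powerset,
        (-1)^S.card * ((NJs X σ k (Fg ∪ S)).card : ℝ) := by
  classical
  set T := (Finset.univ : Finset W).powersetCard k \ Fg with hT
  have hstep1 : ∀ S ∈ T.powerset,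
      (-1:ℝ)^S.card * ((NJs X σ k (Fg ∪ S)).card : ℝ) =
        ∑ e ∈ NJs X σ k Fg,
          (-1:ℝ)^S.card * (if (∀ A ∈ S, Finset.image e A ∈ X.G k) then (1:ℝ) else 0) := by
    intro S _
    rw [← Finset.mul_sum]
    congr 1
    rw [NJs_union_filter, Finset.card_filter]
    push_cast
    rfl
  rw [Finset.sum_congr rfl hstep1, Finset.sum_comm]
  have hinner : ∀ e ∈ NJs X σ k Fg,
      (∑ S ∈ T.powerset,
        (-1:ℝ)^S.card * (if (∀ A ∈ S, Finset.image e A ∈ X.G k) then (1:ℝ) else 0)) =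
      (if T.filter (fun A => Finset.image e A ∈ X.G k) = ∅ then (1:ℝ) else 0) := by
    intro e _
    set Te := T.filter (fun A => Finset.image e A ∈ X.G k) with hTe
    have hsub : Te.powerset ⊆ T.powerset := Finset.powerset_mono.mpr (Finset.filter_subset _ _)
    have hzero : ∀ S ∈ T.powerset, S ∉ Te.powerset →
        (-1:ℝ)^S.card * (if (∀ A ∈ S, Finset.image e A ∈ X.G k) then (1:ℝ) else 0) = 0 := by
      intro S hST hSTe
      have h2 : ¬ (∀ A ∈ S, Finset.image e A ∈ X.G k) := by
        intro h
        refine hSTe (Finset.mem_powerset.mpr fun A hA => ?_)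
        exact Finset.mem_filter.mpr ⟨Finset.mem_powerset.mp hST hA, h A hA⟩
      rw [if_neg h2, mul_zero]
    rw [← Finset.sum_subset hsub hzero]
    have hone : ∀ S ∈ Te.powerset,
        (-1:ℝ)^S.card * (if (∀ A ∈ S, Finset.image e A ∈ X.G k) then (1:ℝ) else 0) =
          (-1:ℝ)^S.card := by
      intro S hS
      have h : ∀ A ∈ S, Finset.image e A ∈ X.G k := fun A hA =>
        (Finset.mem_filter.mp (Finset.mem_powerset.mp hS hA)).2
      rw [if_pos h, mul_one]
    rw [Finset.sum_congr rfl hone, sum_powerset_neg_one_real]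
  rw [Finset.sum_congr rfl hinner]
  have hbool : (∑ e ∈ NJs X σ k Fg,
      (if T.filter (fun A => Finset.image e A ∈ X.G k) = ∅ then (1:ℝ) else 0)) =
      (((NJs X σ k Fg).filter
        (fun e => T.filter (fun A => Finset.image e A ∈ X.G k) = ∅)).card : ℝ) :=
    Finset.sum_boole _ _
  rw [hbool, ICosig_eq_card]
  congr 2
  ext e
  simp only [Finset.mem_filter, NJs_mem, Finset.filter_eq_empty_iff]
  constructor
  · rintro ⟨h1, h2, h3⟩
    refine ⟨⟨h1, h2, fun A hAF => (h3 A (hFg A hAF)).mpr hAF⟩, ?_⟩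
    intro A hAT hAG
    obtain ⟨hA, hAF⟩ := Finset.mem_sdiff.mp hAT
    exact hAF ((h3 A (mem_univA_iff.mp hA)).mp hAG)
  · rintro ⟨⟨h1, h2, h3⟩, h4⟩
    refine ⟨h1, h2, fun A hAk => ⟨fun hAG => ?_, fun hAF => h3 A hAF⟩⟩
    by_contra hAF
    exact h4 (Finset.mem_sdiff.mpr ⟨mem_univA_iff.mpr hAk, hAF⟩) hAG

lemma alt_prod {Fg T : Finset (Finset W)} (hd : Disjoint Fg T) (f : Finset W → ℝ) :
    ∑ S ∈ T.powerset, (-1:ℝ)^S.card * (∏ A ∈ Fg ∪ S, f A) =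
      (∏ A ∈ Fg, f A) * ∏ A ∈ T, (1 - f A) := by
  classical
  have h1 : ∀ S ∈ T.powerset, (-1:ℝ)^S.card * (∏ A ∈ Fg ∪ S, f A) =
      (∏ A ∈ Fg, f A) * ((-1:ℝ)^S.card * ∏ A ∈ S, f A) := by
    intro S hS
    rw [Finset.prod_union (hd.mono_right (Finset.mem_powerset.mp hS))]
    ring
  rw [Finset.sum_congr rfl h1, ← Finset.mul_sum]
  congr 1
  have h2 : ∀ A ∈ T, (1 - f A) = (-f A) + 1 := fun A _ => by ring
  rw [Finset.prod_congr rfl h2, Finset.prod_add]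
  refine Finset.sum_congr rfl ?_
  intro S hS
  rw [Finset.prod_const, one_pow, mul_one]
  have h3 : ∀ A ∈ S, -f A = (-1) * f A := fun A _ => by ring
  rw [Finset.prod_congr rfl h3, Finset.prod_mul_distrib, Finset.prod_const]

end IE


section NZero

variable {X : Cx V l} {σ : W ≃ Fin l} {k : ℕ}

lemma N0_k2 (hW : Fintype.card W = l)
    (hdisj : ∀ s t : Fin l, s ≠ t → Disjoint (X.C s) (X.C t)) :
    (NJs X σ 2 (∅ : Finset (Finset W))).card = ∏ i : Fin l, (X.C i).card := by
  unfold NJs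
  rw [Finset.filter_true_of_mem]
  · unfold FFc
    rw [Fintype.card_piFinset]
    exact Equiv.prod_comp σ (fun i => (X.C i).card)
  · intro e he
    refine ⟨?_, fun A hA => absurd hA (Finset.notMem_empty A)⟩
    unfold Cx.KsetLvl
    rw [if_pos (by norm_num)]
    exact image_cross hW hdisj he

set_option maxHeartbeats 1000000 in
lemma N0_eq_ICosig (hk3 : 3 ≤ k) (hkl : k ≤ l) (hW : Fintype.card W = l)
    (hcx : X.IsComplex k) :
    ((NJs X σ k (∅ : Finset (Finset W))).card : ℝ) =
      (ICosig X (k-1) ((Finset.univ : Finset W).powersetCard (k-1)) σ : ℝ) := by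
  rw [ICosig_eq_card]
  norm_cast
  refine congrArg Finset.card (Finset.filter_congr ?_)
  intro e heF
  have hk2 : 2 ≤ k := by omega
  have hk2' : 2 ≤ k - 1 := by omega
  have hdisj := hcx.1
  have hinj := FFc_inj hdisj heF
  constructor
  · rintro ⟨hskel, -⟩
    have hsk := (skel_iff hk2 hW hdisj heF).mp hskel
    have hGsub : ∀ A : Finset W, A.card = k-1 → Finset.image e A ∈ X.G (k-1) := by
      intro A hA
      refine hsk _ (Finset.image_subset_image (Finset.subset_univ A)) ?_ hk3
      rw [Finset.card_image_of_injective _ hinj, hA]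
    refine ⟨?_, fun A hA => ⟨fun _ => mem_univA_iff.mpr hA, fun hmem => hGsub A hA⟩⟩
    refine (skel_iff hk2' hW hdisj heF).mpr ?_
    intro P hP hPc h3'
    obtain ⟨P', h1, h2, h3⟩ := Finset.exists_subsuperset_card_eq (n := k-1) hP (by omega)
      (by rw [image_card_eq hW hdisj heF]; omega)
    have hP'G : P' ∈ X.G (k-1) := hsk P' h2 h3 hk3
    have hsub := hcx.2.2 (k-1) (by omega) (by omega) hP'G
    unfold Kset at hsub
    rw [Finset.mem_filter] at hsub
    refine hsub.2 P ?_
    rw [Finset.mem_powersetCard]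
    exact ⟨h1, hPc⟩
  · rintro ⟨hskel', hpat⟩
    refine ⟨?_, fun A hA => absurd hA (Finset.notMem_empty A)⟩
    refine (skel_iff hk2 hW hdisj heF).mpr ?_
    intro P hP hPc _
    set A := Finset.univ.filter (fun w => e w ∈ P) with hA
    have himg : Finset.image e A = P := by
      ext x
      constructor
      · intro hx
        obtain ⟨w, hw, rfl⟩ := Finset.mem_image.mp hx
        exact (Finset.mem_filter.mp hw).2
      · intro hx
        obtain ⟨w, _, rfl⟩ := Finset.mem_image.mp (hP hx)
        exact Finset.mem_image_of_mem e (Finset.mem_filter.mpr ⟨Finset.mem_univ w, hx⟩)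
    have hAc : A.card = k - 1 := by
      rw [← hPc, ← himg, Finset.card_image_of_injective _ hinj]
    exact himg ▸ (hpat A hAc).mpr (mem_univA_iff.mpr hAc)

end NZero


section Transfer

variable {X : Cx V l} {σ : W ≃ Fin l} {k : ℕ}

lemma IsComplex_down {j : ℕ} (hcx : X.IsComplex k) (h : j ≤ k) : X.IsComplex j :=
  ⟨hcx.1, fun j' h2 h3 => hcx.2.1 j' h2 (h3.trans h), fun j' h2 h3 => hcx.2.2 j' h2 (h3.trans h)⟩

lemma hregA_of (hk2 : 2 ≤ k) {ε : ℝ} {d : ℕ → ℝ} {p : Finset (Fin l) → ℝ}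
    (hreg : ∀ L ∈ (Finset.univ : Finset (Fin l)).powersetCard k, X.RestrRegular k ε d L (p L)) :
    ∀ A : Finset W, A.card = k →
      RegPairC X.gnd (X.cross k) (k-1) ε (p (A.image σ)) (X.restr k (A.image σ))
        (X.restr (k-1) (A.image σ)) := by
  intro A hA
  have hLc : (A.image σ).card = k := by
    rw [Finset.card_image_of_injective _ σ.injective, hA]
  have hL : A.image σ ∈ (Finset.univ : Finset (Fin l)).powersetCard k :=
    Finset.mem_powersetCard.mpr ⟨Finset.subset_univ _, hLc⟩
  have h := hreg _ hL k hk2 (le_refl k) (A.image σ)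
    (Finset.mem_powersetCard.mpr ⟨Finset.Subset.refl _, hLc⟩)
  rwa [if_pos rfl] at h

set_option maxHeartbeats 1000000 in
lemma restr_reg_down (hk3 : 3 ≤ k) (hkl : k ≤ l) {ε : ℝ} {d : ℕ → ℝ} {p : Finset (Fin l) → ℝ}
    (hreg : ∀ L ∈ (Finset.univ : Finset (Fin l)).powersetCard k, X.RestrRegular k ε d L (p L)) :
    ∀ L' ∈ (Finset.univ : Finset (Fin l)).powersetCard (k-1),
      X.RestrRegular (k-1) ε d L' (d (k-1)) := by
  intro L' hL'
  intro j hj2 hjk1 L'' hL''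
  obtain ⟨hL'u, hL'c⟩ := Finset.mem_powersetCard.mp hL'
  obtain ⟨hL''s, hL''c⟩ := Finset.mem_powersetCard.mp hL''
  obtain ⟨L, hLsub, hLcard⟩ := Finset.exists_superset_card_eq (s := L') (n := k)
    (by rw [hL'c]; omega) (by simp; omega)
  have hL : L ∈ (Finset.univ : Finset (Fin l)).powersetCard k :=
    Finset.mem_powersetCard.mpr ⟨Finset.subset_univ _, hLcard⟩
  have h := hreg L hL j hj2 (by omega) L''
    (Finset.mem_powersetCard.mpr ⟨hL''s.trans hLsub, hL''c⟩)
  rw [if_neg (by omega)] at h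
  have hd' : (if j = k-1 then d (k-1) else d j) = d j := by
    rcases eq_or_ne j (k-1) with hjk | hjk
    · rw [if_pos hjk, hjk]
    · rw [if_neg hjk]
  rw [hd']
  intro Q hQ
  have h2 := h Q hQ
  have hAeq : X.restr j L ∩ KsetC X.gnd (X.cross j) (j-1) (j-1+1) Q
      = X.restr j L' ∩ KsetC X.gnd (X.cross j) (j-1) (j-1+1) Q := by
    have hj1 : j - 1 + 1 = j := by omega
    rw [hj1]
    ext S
    simp only [Finset.mem_inter]
    constructor
    · rintro ⟨h1, h3⟩
      refine ⟨?_, h3⟩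
      have hsup : S ⊆ L''.sup X.C := KsetC_subset_sup hj2 hQ h3
      unfold Cx.restr at h1 ⊢
      rw [if_neg (by omega)] at h1 ⊢
      rw [Finset.mem_filter] at h1
      refine Finset.mem_filter.mpr ⟨h1.1, hsup.trans ?_⟩
      exact Finset.le_iff_subset.mp (Finset.sup_mono hL''s)
    · rintro ⟨h1, h3⟩
      refine ⟨?_, h3⟩
      have hsup : S ⊆ L''.sup X.C := KsetC_subset_sup hj2 hQ h3
      unfold Cx.restr at h1 ⊢
      rw [if_neg (by omega)] at h1 ⊢
      rw [Finset.mem_filter] at h1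
      refine Finset.mem_filter.mpr ⟨h1.1, hsup.trans ?_⟩
      exact Finset.le_iff_subset.mp (Finset.sup_mono (hL''s.trans hLsub))
  rw [hAeq] at h2
  exact h2

end Transfer


section Assemble

variable {X : Cx V l} {σ : W ≃ Fin l} {k : ℕ}

set_option maxHeartbeats 2000000 in
lemma assemble (hk2 : 2 ≤ k) (hW : Fintype.card W = l) (hcx : X.IsComplex k)
    {m : ℕ} (hm : 1 ≤ m) (hsize : ∀ i, (X.C i).card = m ∨ (X.C i).card = m + 1)
    {ε : ℝ} {p : Finset (Fin l) → ℝ} (hε0 : 0 < ε) (hε1 : ε ≤ 1)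
    (hregA : ∀ A : Finset W, A.card = k →
      RegPairC X.gnd (X.cross k) (k-1) ε (p (A.image σ)) (X.restr k (A.image σ))
        (X.restr (k-1) (A.image σ)))
    {Dm δ : ℝ} (hDm : 0 < Dm) (hδ0 : 0 ≤ δ) (hδ1 : δ ≤ 1/2)
    (hN0 : |((NJs X σ k (∅ : Finset (Finset W))).card : ℝ) - Dm| ≤ δ * Dm)
    {Fg : Finset (Finset W)} (hFg : ∀ A ∈ Fg, A.card = k) :
    |(ICosig X k Fg σ : ℝ) -
      (∏ A ∈ Fg, p (A.image σ)) *
        (∏ A ∈ ((Finset.univ : Finset W).powersetCard k \ Fg), (1 - p (A.image σ))) * Dm|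
      ≤ (2:ℝ)^(l.choose k) * ((3:ℝ)^(l.choose k) *
          (ε * ((2:ℝ)^l + 3*((k:ℝ)^k * 2^l)) * (m:ℝ)^l) + (2:ℝ)^(l.choose k) * (δ * Dm)) := by
  classical
  set t := l.choose k with htdef
  set c2 := ε * ((2:ℝ)^l + 3*((k:ℝ)^k * 2^l)) * (m:ℝ)^l with hc2
  have hc2n : 0 ≤ c2 := by rw [hc2]; positivity
  set N0 := ((NJs X σ k (∅ : Finset (Finset W))).card : ℝ) with hN0def
  have hN0pos : 0 < N0 := by
    have h := abs_le.mp hN0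
    nlinarith
  have hNE : (NJs X σ k (∅ : Finset (Finset W))).Nonempty := by
    have h' : (0:ℝ) < (((NJs X σ k (∅ : Finset (Finset W))).card : ℕ) : ℝ) := hN0pos
    exact Finset.card_pos.mp (Nat.cast_pos.mp h')
  have hpA : ∀ A : Finset W, A.card = k → |p (A.image σ)| ≤ 2 := by
    intro A hA
    have hKB : KsetC X.gnd (X.cross k) (k-1) k (X.restr (k-1) (A.image σ)) ≠ ∅ := by
      obtain ⟨e, he⟩ := hNE
      intro hemp
      have hmem := image_A0_mem_K hk2 hcx hA (le_refl _) he (sub_image_mem_B hk2 hcx hW he)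
      rw [hemp] at hmem
      exact Finset.notMem_empty _ hmem
    exact pL_bound hε0 hε1 hk2 hKB (hregA A hA)
  have hcardA : ((Finset.univ : Finset W).powersetCard k).card = t := by
    rw [Finset.card_powersetCard, Finset.card_univ, hW]
  have hJest : ∀ J ⊆ (Finset.univ : Finset W).powersetCard k,
      |((NJs X σ k J).card : ℝ) - (∏ A ∈ J, p (A.image σ)) * Dm|
      ≤ (3:ℝ)^t * c2 + (2:ℝ)^t * (δ * Dm) := by
    intro J hJ
    have hJk : ∀ A ∈ J, A.card = k := fun A hA => mem_univA_iff.mp (hJ hA)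
    have h1 := NJ_est hk2 hW hcx hm hsize hε0 hε1 hregA J hJk
    have hJcard : J.card ≤ t := hcardA ▸ Finset.card_le_card hJ
    have h3J : (3:ℝ)^J.card ≤ 3^t := pow_le_pow_right₀ (by norm_num) hJcard
    have hPrb : |∏ A ∈ J, p (A.image σ)| ≤ (2:ℝ)^t := by
      rw [Finset.abs_prod]
      calc ∏ A ∈ J, |p (A.image σ)| ≤ ∏ _A ∈ J, (2:ℝ) :=
            Finset.prod_le_prod (fun A _ => abs_nonneg _) (fun A hA => hpA A (hJk A hA))
      _ = 2^J.card := by rw [Finset.prod_const]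
      _ ≤ 2^t := pow_le_pow_right₀ (by norm_num) hJcard
    have hsplit : ((NJs X σ k J).card : ℝ) - (∏ A ∈ J, p (A.image σ)) * Dm
        = (((NJs X σ k J).card : ℝ) - (∏ A ∈ J, p (A.image σ)) * N0)
          + (∏ A ∈ J, p (A.image σ)) * (N0 - Dm) := by ring
    have htri : |((NJs X σ k J).card : ℝ) - (∏ A ∈ J, p (A.image σ)) * Dm|
        ≤ |((NJs X σ k J).card : ℝ) - (∏ A ∈ J, p (A.image σ)) * N0|
          + |(∏ A ∈ J, p (A.image σ)) * (N0 - Dm)| := by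
      rw [hsplit]; exact abs_add_le _ _
    have h2 : |(∏ A ∈ J, p (A.image σ)) * (N0 - Dm)| ≤ (2:ℝ)^t * (δ * Dm) := by
      rw [abs_mul]
      exact mul_le_mul hPrb hN0 (abs_nonneg _) (by positivity)
    have h1' : |((NJs X σ k J).card : ℝ) - (∏ A ∈ J, p (A.image σ)) * N0|
        ≤ (3:ℝ)^t * c2 := by
      refine h1.trans ?_
      rw [hc2]
      have hXn : (0:ℝ) ≤ ε * ((2:ℝ)^l + 3*((k:ℝ)^k * 2^l)) * (m:ℝ)^l := by positivity
      nlinarith [h3J, hXn]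
    linarith
  rw [ICosig_IE hFg]
  set T := (Finset.univ : Finset W).powersetCard k \ Fg with hTdef
  have hdisjT : Disjoint Fg T := Finset.disjoint_sdiff
  have hmain : (∏ A ∈ Fg, p (A.image σ)) * (∏ A ∈ T, (1 - p (A.image σ))) * Dm
      = ∑ S ∈ T.powerset, (-1:ℝ)^S.card * ((∏ A ∈ Fg ∪ S, p (A.image σ)) * Dm) := by
    rw [← alt_prod hdisjT (fun A => p (A.image σ)), Finset.sum_mul]
    exact Finset.sum_congr rfl (fun S _ => by ring)
  rw [hmain, ← Finset.sum_sub_distrib]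
  refine (Finset.abs_sum_le_sum_abs _ _).trans ?_
  have hterm : ∀ S ∈ T.powerset,
      |(-1:ℝ)^S.card * ((NJs X σ k (Fg ∪ S)).card : ℝ) -
        (-1:ℝ)^S.card * ((∏ A ∈ Fg ∪ S, p (A.image σ)) * Dm)|
      ≤ (3:ℝ)^t * c2 + (2:ℝ)^t * (δ * Dm) := by
    intro S hS
    rw [← mul_sub, abs_mul, abs_pow, abs_neg, abs_one, one_pow, one_mul]
    refine hJest (Fg ∪ S) ?_
    rw [Finset.union_subset_iff]
    constructor
    · intro A hA
      exact mem_univA_iff.mpr (hFg A hA)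
    · exact (Finset.mem_powerset.mp hS).trans (Finset.sdiff_subset)
  refine (Finset.sum_le_sum hterm).trans ?_
  rw [Finset.sum_const, nsmul_eq_mul]
  have hTpow : ((T.powerset.card : ℝ)) ≤ (2:ℝ)^t := by
    rw [Finset.card_powerset]
    have hTcard : T.card ≤ t := by
      rw [hTdef]
      exact hcardA ▸ Finset.card_le_card Finset.sdiff_subset
    calc ((2^T.card : ℕ) : ℝ) = (2:ℝ)^T.card := by push_cast; ring
    _ ≤ (2:ℝ)^t := pow_le_pow_right₀ (by norm_num) hTcard
  have hnn : (0:ℝ) ≤ (3:ℝ)^t * c2 + (2:ℝ)^t * (δ * Dm) := by positivity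
  calc (T.powerset.card : ℝ) * ((3:ℝ)^t * c2 + (2:ℝ)^t * (δ * Dm))
      ≤ (2:ℝ)^t * ((3:ℝ)^t * c2 + (2:ℝ)^t * (δ * Dm)) :=
        mul_le_mul_of_nonneg_right hTpow hnn
  _ = (2:ℝ)^t * ((3:ℝ)^t * c2 + (2:ℝ)^t * (δ * Dm)) := rfl

end Assemble


section Numerics

lemma pow_ratio_le {lq m : ℕ} {δ : ℝ} (hδ0 : 0 < δ) (hδ1 : δ ≤ 1) (hm1 : 1 ≤ m)
    (hm : 4*(lq:ℝ) ≤ δ * m) : ((m:ℝ)+1)^lq ≤ (1+δ) * (m:ℝ)^lq := by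
  have hmp : (0:ℝ) < m := by exact_mod_cast hm1
  have hm1p : (0:ℝ) < (m:ℝ)+1 := by positivity
  have hb : (1:ℝ) + (lq:ℝ) * (-(1/((m:ℝ)+1))) ≤ (1 - 1/((m:ℝ)+1))^lq := by
    refine one_add_mul_le_pow ?_ lq
    have h1 : (0:ℝ) < 1/((m:ℝ)+1) := by positivity
    have h2 : 1/((m:ℝ)+1) ≤ 1 := by
      rw [div_le_one hm1p]; linarith
    linarith
  have heq : (1:ℝ) - 1/((m:ℝ)+1) = (m:ℝ)/((m:ℝ)+1) := by field_simp; ring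
  have hfrac : (lq:ℝ)/((m:ℝ)+1) ≤ δ/4 := by
    rw [div_le_div_iff₀ hm1p (by norm_num)]
    nlinarith
  have h2 : 1/(1+δ) ≤ 1 - δ/4 := by
    rw [div_le_iff₀ (by positivity : (0:ℝ) < 1+δ)]
    nlinarith
  have hkey : 1/(1+δ) ≤ ((m:ℝ)/((m:ℝ)+1))^lq := by
    rw [← heq]
    refine le_trans ?_ hb
    have e1 : (1:ℝ) + (lq:ℝ)*(-(1/((m:ℝ)+1))) = 1 - (lq:ℝ)/((m:ℝ)+1) := by ring
    rw [e1]
    linarith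
  rw [div_pow] at hkey
  rw [div_le_div_iff₀ (by positivity) (by positivity)] at hkey
  nlinarith [pow_pos hmp lq, pow_pos hm1p lq]

lemma sum_choose_le {l k : ℕ} (hkl : k - 1 ≤ l) :
    ∑ j ∈ Finset.Icc 2 (k-1), l.choose j ≤ 2^l := by
  have hsub : Finset.Icc 2 (k-1) ⊆ Finset.range (l+1) := by
    intro j hj
    rw [Finset.mem_range]
    have := (Finset.mem_Icc.mp hj).2
    omega
  calc ∑ j ∈ Finset.Icc 2 (k-1), l.choose j ≤ ∑ j ∈ Finset.range (l+1), l.choose j :=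
        Finset.sum_le_sum_of_subset hsub
  _ = 2^l := Nat.sum_range_choose l

lemma D_bounds {l k : ℕ} {d : ℕ → ℝ} {d₀ : ℝ} (hd0 : 0 < d₀) (hkl : k - 1 ≤ l)
    (hd : ∀ j, 2 ≤ j → j ≤ k - 1 → d₀ ≤ d j ∧ d j ≤ 1 - d₀) :
    0 < ∏ j ∈ Finset.Icc 2 (k-1), d j ^ (l.choose j) ∧
      (min d₀ 1)^(2^l) ≤ ∏ j ∈ Finset.Icc 2 (k-1), d j ^ (l.choose j) := by
  have hmn0 : 0 < min d₀ 1 := lt_min hd0 one_pos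
  have hmn1 : min d₀ 1 ≤ 1 := min_le_right _ _
  constructor
  · refine Finset.prod_pos ?_
    intro j hj
    obtain ⟨h1, h2⟩ := Finset.mem_Icc.mp hj
    have hdj : 0 < d j := lt_of_lt_of_le hd0 (hd j h1 h2).1
    positivity
  · calc (min d₀ 1)^(2^l) ≤ (min d₀ 1)^(∑ j ∈ Finset.Icc 2 (k-1), l.choose j) :=
          pow_le_pow_of_le_one hmn0.le hmn1 (sum_choose_le hkl)
    _ = ∏ j ∈ Finset.Icc 2 (k-1), (min d₀ 1) ^ (l.choose j) := by
          rw [Finset.prod_pow_eq_pow_sum]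
    _ ≤ ∏ j ∈ Finset.Icc 2 (k-1), d j ^ (l.choose j) := by
          refine Finset.prod_le_prod (fun j hj => by positivity) ?_
          intro j hj
          obtain ⟨h1, h2⟩ := Finset.mem_Icc.mp hj
          exact pow_le_pow_left₀ hmn0.le ((min_le_left _ _).trans (hd j h1 h2).1) _

lemma final_arith {t : ℕ} {CB M D Dlow γ ε δ : ℝ}
    (hCB : 0 ≤ CB) (hM : 0 ≤ M) (hD : 0 < D) (hDlow : 0 < Dlow) (hDle : Dlow ≤ D)
    (hγ : 0 < γ) (hε0 : 0 < ε) (hδ0 : 0 ≤ δ)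
    (hε : ε ≤ γ * Dlow / (2 * ((2:ℝ)^t * 3^t * CB) + 1))
    (hδ : δ ≤ γ / (2 * (4:ℝ)^t)) :
    (2:ℝ)^t * ((3:ℝ)^t * (ε * CB * M) + (2:ℝ)^t * (δ * (D * M))) ≤ γ * (D * M) := by
  set CC := (2:ℝ)^t * 3^t * CB with hCC
  have hCC0 : 0 ≤ CC := by positivity
  have hden : (0:ℝ) < 2 * CC + 1 := by positivity
  have A1 : CC * ε ≤ CC * (γ * Dlow / (2 * CC + 1)) := mul_le_mul_of_nonneg_left hε hCC0
  have A2 : CC * (γ * Dlow / (2 * CC + 1)) ≤ (γ/2) * Dlow := by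
    rw [mul_div_assoc']
    rw [div_le_iff₀ hden]
    nlinarith [mul_nonneg hγ.le hDlow.le]
  have A3 : (γ/2) * Dlow ≤ (γ/2) * D := by
    refine mul_le_mul_of_nonneg_left hDle (by positivity)
  have hA : CC * ε * M ≤ (γ/2) * D * M := by
    refine mul_le_mul_of_nonneg_right ?_ hM
    linarith
  have hB : (4:ℝ)^t * δ ≤ γ/2 := by
    have h4 : (0:ℝ) < (4:ℝ)^t := by positivity
    have := mul_le_mul_of_nonneg_left hδ h4.le
    calc (4:ℝ)^t * δ ≤ (4:ℝ)^t * (γ / (2 * (4:ℝ)^t)) := this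
    _ = γ/2 := by field_simp
  have hB' : (4:ℝ)^t * δ * (D * M) ≤ (γ/2) * (D * M) := by
    refine mul_le_mul_of_nonneg_right hB (by positivity)
  have hfour : (4:ℝ)^t = (2:ℝ)^t * (2:ℝ)^t := by
    rw [show (4:ℝ) = 2*2 by norm_num, mul_pow]
  have heq : (2:ℝ)^t * ((3:ℝ)^t * (ε * CB * M) + (2:ℝ)^t * (δ * (D * M)))
      = CC * ε * M + (4:ℝ)^t * δ * (D * M) := by
    rw [hCC, hfour]; ring
  rw [heq]
  nlinarith

end Numerics


section Main

/-- the required accuracy of the base count -/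
noncomputable def delta0 (γ : ℝ) (t : ℕ) : ℝ := min (γ/(2*(4:ℝ)^t)) (1/2)

lemma delta0_pos {γ : ℝ} (hγ : 0 < γ) (t : ℕ) : 0 < delta0 γ t :=
  lt_min (by positivity) (by norm_num)

/-- the statement of the induced counting lemma for fixed parameters -/
def GoalP (k l : ℕ) (γ d₀ ε : ℝ) (m : ℕ) : Prop :=
  ∀ (V : Type) [DecidableEq V], ∀ (X : Cx V l) (d : ℕ → ℝ) (p : Finset (Fin l) → ℝ),
    (∀ j, 2 ≤ j → j ≤ k - 1 → d₀ ≤ d j ∧ d j ≤ 1 - d₀) →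
    X.IsComplex k →
    (∀ i, (X.C i).card = m ∨ (X.C i).card = m + 1) →
    (∀ L ∈ (Finset.univ : Finset (Fin l)).powersetCard k, X.RestrRegular k ε d L (p L)) →
    ∀ (W : Type) [Fintype W] [DecidableEq W], Fintype.card W = l →
    ∀ Fg : Finset (Finset W), (∀ e ∈ Fg, e.card = k) →
    ∀ σ : W ≃ Fin l,
    |((ICosig X k Fg σ : ℝ)) -
      (∏ e ∈ Fg, p (e.image σ)) *
        (∏ e ∈ ((Finset.univ : Finset W).powersetCard k \ Fg), (1 - p (e.image σ))) *
        ((∏ j ∈ Finset.Icc 2 (k-1), d j ^ (l.choose j)) * (m : ℝ) ^ l)|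
      ≤ γ * ((∏ j ∈ Finset.Icc 2 (k-1), d j ^ (l.choose j)) * (m : ℝ) ^ l)

/-- the base-count accuracy statement -/
def N0P (k l : ℕ) (γ d₀ ε : ℝ) (m : ℕ) : Prop :=
  ∀ (V : Type) [DecidableEq V], ∀ (X : Cx V l) (d : ℕ → ℝ) (p : Finset (Fin l) → ℝ),
    (∀ j, 2 ≤ j → j ≤ k - 1 → d₀ ≤ d j ∧ d j ≤ 1 - d₀) →
    X.IsComplex k →
    (∀ i, (X.C i).card = m ∨ (X.C i).card = m + 1) →
    (∀ L ∈ (Finset.univ : Finset (Fin l)).powersetCard k, X.RestrRegular k ε d L (p L)) →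
    ∀ (W : Type) [Fintype W] [DecidableEq W], Fintype.card W = l →
    ∀ σ : W ≃ Fin l,
    |((NJs X σ k (∅ : Finset (Finset W))).card : ℝ) -
        (∏ j ∈ Finset.Icc 2 (k-1), d j ^ (l.choose j)) * (m : ℝ) ^ l|
      ≤ delta0 γ (l.choose k) *
          ((∏ j ∈ Finset.Icc 2 (k-1), d j ^ (l.choose j)) * (m : ℝ) ^ l)

set_option maxHeartbeats 2000000 in
lemma common (k l : ℕ) (hk2 : 2 ≤ k) (hkl : k ≤ l) (γ d₀ : ℝ) (hγ : 0 < γ) (hd₀ : 0 < d₀)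
    (HN0 : ∃ εN : ℝ, 0 < εN ∧ ∀ ε : ℝ, 0 < ε → ε ≤ εN →
      ∃ m₀N : ℕ, ∀ m : ℕ, m₀N ≤ m → N0P k l γ d₀ ε m) :
    ∃ ε₀ : ℝ, 0 < ε₀ ∧ ∀ ε : ℝ, 0 < ε → ε ≤ ε₀ →
      ∃ m₀ : ℕ, ∀ m : ℕ, m₀ ≤ m → GoalP k l γ d₀ ε m := by
  obtain ⟨εN, hεN0, HN⟩ := HN0
  set t := l.choose k with ht
  set Dlow := (min d₀ 1)^(2^l) with hDlowd
  have hmin0 : 0 < min d₀ 1 := lt_min hd₀ one_pos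
  have hDlow0 : 0 < Dlow := by rw [hDlowd]; positivity
  set CB := (2:ℝ)^l + 3*((k:ℝ)^k * 2^l) with hCBd
  have hCB0 : 0 ≤ CB := by rw [hCBd]; positivity
  set δ := delta0 γ t with hδd
  have hδ0 : 0 < δ := delta0_pos hγ t
  have hδhalf : δ ≤ 1/2 := min_le_right _ _
  refine ⟨min εN (min (γ * Dlow / (2 * ((2:ℝ)^t * 3^t * CB) + 1)) 1),
    lt_min hεN0 (lt_min (by positivity) one_pos), ?_⟩
  intro ε hε0 hεle
  obtain ⟨m₀N, HmN⟩ := HN ε hε0 (hεle.trans (min_le_left _ _))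
  refine ⟨max m₀N 1, ?_⟩
  intro m hm
  intro V _ X d p hd hcx hsize hreg W _ _ hW Fg hFg σ
  have hm1 : 1 ≤ m := le_trans (le_max_right _ _) hm
  have hε1 : ε ≤ 1 := hεle.trans ((min_le_right _ _).trans (min_le_right _ _))
  have hεD : ε ≤ γ * Dlow / (2 * ((2:ℝ)^t * 3^t * CB) + 1) :=
    hεle.trans ((min_le_right _ _).trans (min_le_left _ _))
  have hN0 := HmN m (le_trans (le_max_left _ _) hm) V X d p hd hcx hsize hreg W hW σ
  obtain ⟨hD0, hDle⟩ := D_bounds (l := l) (k := k) hd₀ (by omega) hd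
  have hml : (0:ℝ) < (m:ℝ)^l := by
    have : (0:ℝ) < (m:ℝ) := by exact_mod_cast hm1
    positivity
  have hDm0 : (0:ℝ) < (∏ j ∈ Finset.Icc 2 (k-1), d j ^ (l.choose j)) * (m:ℝ)^l :=
    mul_pos hD0 hml
  have hres := assemble hk2 hW hcx hm1 hsize hε0 hε1 (hregA_of hk2 hreg)
    hDm0 hδ0.le hδhalf hN0 hFg
  refine hres.trans ?_
  exact final_arith hCB0 hml.le hD0 hDlow0 hDle hγ hε0 hδ0.le hεD (min_le_left _ _)

end Main


section Providers

set_option maxHeartbeats 1000000 in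
lemma base_N0 (l : ℕ) (γ d₀ : ℝ) (hγ : 0 < γ) (hd₀ : 0 < d₀) :
    ∃ εN : ℝ, 0 < εN ∧ ∀ ε : ℝ, 0 < ε → ε ≤ εN →
      ∃ m₀N : ℕ, ∀ m : ℕ, m₀N ≤ m → N0P 2 l γ d₀ ε m := by
  have hδ0 : 0 < delta0 γ (l.choose 2) := delta0_pos hγ _
  have hδ1 : delta0 γ (l.choose 2) ≤ 1 := le_trans (min_le_right _ _) (by norm_num)
  refine ⟨1, one_pos, fun ε hε0 hε1 => ⟨max 1 (Nat.ceil (4*(l:ℝ)/delta0 γ (l.choose 2))), ?_⟩⟩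
  intro m hm
  intro V _ X d p hd hcx hsize hreg W _ _ hW σ
  have hm1 : 1 ≤ m := le_trans (le_max_left _ _) hm
  have hD1 : (∏ j ∈ Finset.Icc 2 (2-1), d j ^ (l.choose j)) = (1:ℝ) := by
    rw [Finset.Icc_eq_empty (by omega), Finset.prod_empty]
  rw [hD1, one_mul]
  have hval := N0_k2 (X := X) (σ := σ) (W := W) hW hcx.1
  have hlow : (m:ℝ)^l ≤ ((NJs X σ 2 (∅ : Finset (Finset W))).card : ℝ) := by
    rw [hval]
    push_cast
    calc (m:ℝ)^l = ∏ _i : Fin l, (m:ℝ) := by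
          rw [Finset.prod_const, Finset.card_univ, Fintype.card_fin]
    _ ≤ ∏ i : Fin l, ((X.C i).card : ℝ) := by
          refine Finset.prod_le_prod (fun _ _ => by positivity) ?_
          intro i _
          rcases hsize i with h | h <;> rw [h] <;> push_cast <;> linarith
  have hhigh : ((NJs X σ 2 (∅ : Finset (Finset W))).card : ℝ) ≤ ((m:ℝ)+1)^l := by
    rw [hval]
    push_cast
    calc ∏ i : Fin l, ((X.C i).card : ℝ) ≤ ∏ _i : Fin l, ((m:ℝ)+1) := by
          refine Finset.prod_le_prod (fun _ _ => by positivity) ?_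
          intro i _
          rcases hsize i with h | h <;> rw [h] <;> push_cast <;> linarith
    _ = ((m:ℝ)+1)^l := by rw [Finset.prod_const, Finset.card_univ, Fintype.card_fin]
  have hceil : (4*(l:ℝ)) ≤ delta0 γ (l.choose 2) * m := by
    have hc : Nat.ceil (4*(l:ℝ)/delta0 γ (l.choose 2)) ≤ m := le_trans (le_max_right _ _) hm
    have h2 : 4*(l:ℝ)/delta0 γ (l.choose 2) ≤ m := Nat.ceil_le.mp hc
    rw [div_le_iff₀ hδ0] at h2
    linarith
  have hpr : ((m:ℝ)+1)^l ≤ (1+delta0 γ (l.choose 2))*(m:ℝ)^l :=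
    pow_ratio_le hδ0 hδ1 hm1 hceil
  have hmlnn : (0:ℝ) ≤ (m:ℝ)^l := by positivity
  rw [abs_le]
  constructor
  · nlinarith [mul_nonneg hδ0.le hmlnn]
  · nlinarith

set_option maxHeartbeats 1000000 in
lemma step_N0 (k l : ℕ) (hk2 : 2 ≤ k) (hkl : k + 1 ≤ l) (γ d₀ : ℝ) (hγ : 0 < γ)
    (hd₀ : 0 < d₀)
    (ih : ∀ γ' d₀' : ℝ, 0 < γ' → 0 < d₀' → ∀ l' : ℕ, k ≤ l' →
      ∃ ε₀ : ℝ, 0 < ε₀ ∧ ∀ ε : ℝ, 0 < ε → ε ≤ ε₀ →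
        ∃ m₀ : ℕ, ∀ m : ℕ, m₀ ≤ m → GoalP k l' γ' d₀' ε m) :
    ∃ εN : ℝ, 0 < εN ∧ ∀ ε : ℝ, 0 < ε → ε ≤ εN →
      ∃ m₀N : ℕ, ∀ m : ℕ, m₀N ≤ m → N0P (k+1) l γ d₀ ε m := by
  have hδ0 : 0 < delta0 γ (l.choose (k+1)) := delta0_pos hγ _
  have hmin0 : 0 < min d₀ 1 := lt_min hd₀ one_pos
  have hDlow0 : 0 < (min d₀ 1)^(2^l) := by positivity
  obtain ⟨ε₀', hε₀', H'⟩ := ih (delta0 γ (l.choose (k+1)) * (min d₀ 1)^(2^l)) d₀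
    (mul_pos hδ0 hDlow0) hd₀ l (by omega)
  refine ⟨ε₀', hε₀', ?_⟩
  intro ε hε0 hεle
  obtain ⟨m₀', Hm'⟩ := H' ε hε0 hεle
  refine ⟨max m₀' 1, ?_⟩
  intro m hm
  intro V _ X d p hd hcx hsize hreg W _ _ hW σ
  have hm1 : 1 ≤ m := le_trans (le_max_right _ _) hm
  have hGoal := Hm' m (le_trans (le_max_left _ _) hm) V X d (fun _ => d k)
    (fun j h2 h3 => hd j h2 (by omega))
    (IsComplex_down hcx (by omega))
    hsize
    (restr_reg_down (by omega) (by omega) hreg)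
    W hW ((Finset.univ : Finset W).powersetCard k) (fun e he => mem_univA_iff.mp he) σ
  have hsd : ((Finset.univ : Finset W).powersetCard k) \
      ((Finset.univ : Finset W).powersetCard k) = (∅ : Finset (Finset W)) :=
    Finset.sdiff_self _
  rw [hsd, Finset.prod_empty, mul_one] at hGoal
  have hprodc : (∏ e ∈ (Finset.univ : Finset W).powersetCard k, d k) = d k ^ (l.choose k) := by
    rw [Finset.prod_const, Finset.card_powersetCard, Finset.card_univ, hW]
  rw [hprodc] at hGoal
  have hN0eq := N0_eq_ICosig (k := k+1) (X := X) (σ := σ) (by omega) (by omega) hW hcx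
  simp only [Nat.add_sub_cancel] at hN0eq
  rw [← hN0eq] at hGoal
  have hIcc : Finset.Icc 2 (k+1-1) = insert k (Finset.Icc 2 (k-1)) := by
    ext j
    simp only [Finset.mem_Icc, Finset.mem_insert]
    omega
  rw [hIcc, Finset.prod_insert (by simp [Finset.mem_Icc]; omega)]
  have hdk : d₀ ≤ d k := (hd k hk2 (by omega)).1
  obtain ⟨hD''0, -⟩ := D_bounds (l := l) (k := k) hd₀ (by omega)
    (fun j h2 h3 => hd j h2 (by omega))
  have hc2l : l.choose k ≤ 2^l := by
    calc l.choose k ≤ ∑ j ∈ Finset.range (l+1), l.choose j :=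
          Finset.single_le_sum (fun _ _ => Nat.zero_le _) (Finset.mem_range.mpr (by omega))
    _ = 2^l := Nat.sum_range_choose l
  have hDlowle : (min d₀ 1)^(2^l) ≤ d k ^ (l.choose k) := by
    calc (min d₀ 1)^(2^l) ≤ (min d₀ 1)^(l.choose k) :=
          pow_le_pow_of_le_one hmin0.le (min_le_right _ _) hc2l
    _ ≤ d k ^ (l.choose k) := pow_le_pow_left₀ hmin0.le ((min_le_left _ _).trans hdk) _
  have hmlnn : (0:ℝ) ≤ (m:ℝ)^l := by positivity
  have hD''ml : (0:ℝ) ≤ (∏ j ∈ Finset.Icc 2 (k-1), d j ^ (l.choose j)) * (m:ℝ)^l :=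
    mul_nonneg hD''0.le hmlnn
  have heq1 : ((NJs X σ (k+1) (∅ : Finset (Finset W))).card : ℝ) -
      d k ^ (l.choose k) * (∏ j ∈ Finset.Icc 2 (k-1), d j ^ (l.choose j)) * (m:ℝ)^l
      = ((NJs X σ (k+1) (∅ : Finset (Finset W))).card : ℝ) -
        d k ^ (l.choose k) *
          ((∏ j ∈ Finset.Icc 2 (k-1), d j ^ (l.choose j)) * (m:ℝ)^l) := by ring
  calc |((NJs X σ (k+1) (∅ : Finset (Finset W))).card : ℝ) -
      d k ^ (l.choose k) * (∏ j ∈ Finset.Icc 2 (k-1), d j ^ (l.choose j)) * (m:ℝ)^l|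
      = |((NJs X σ (k+1) (∅ : Finset (Finset W))).card : ℝ) -
        d k ^ (l.choose k) *
          ((∏ j ∈ Finset.Icc 2 (k-1), d j ^ (l.choose j)) * (m:ℝ)^l)| := by rw [heq1]
  _ ≤ delta0 γ (l.choose (k+1)) * (min d₀ 1)^(2^l) *
        ((∏ j ∈ Finset.Icc 2 (k-1), d j ^ (l.choose j)) * (m:ℝ)^l) := hGoal
  _ ≤ delta0 γ (l.choose (k+1)) * (d k ^ (l.choose k)) *
        ((∏ j ∈ Finset.Icc 2 (k-1), d j ^ (l.choose j)) * (m:ℝ)^l) := by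
        refine mul_le_mul_of_nonneg_right ?_ hD''ml
        exact mul_le_mul_of_nonneg_left hDlowle hδ0.le
  _ = delta0 γ (l.choose (k+1)) *
        (d k ^ (l.choose k) * (∏ j ∈ Finset.Icc 2 (k-1), d j ^ (l.choose j)) * (m:ℝ)^l) := by
        ring

end Providers

theorem main_aux : ∀ k : ℕ, 2 ≤ k → ∀ γ d₀ : ℝ, 0 < γ → 0 < d₀ → ∀ l : ℕ, k ≤ l →
    ∃ ε₀ : ℝ, 0 < ε₀ ∧ ∀ ε : ℝ, 0 < ε → ε ≤ ε₀ →
      ∃ m₀ : ℕ, ∀ m : ℕ, m₀ ≤ m → GoalP k l γ d₀ ε m := by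
  intro k hk2
  induction k, hk2 using Nat.le_induction with
  | base =>
    intro γ d₀ hγ hd₀ l hkl
    exact common 2 l (by norm_num) hkl γ d₀ hγ hd₀ (base_N0 l γ d₀ hγ hd₀)
  | succ k hk ih =>
    intro γ d₀ hγ hd₀ l hkl
    exact common (k+1) l (by omega) hkl γ d₀ hγ hd₀ (step_N0 k l hk hkl γ d₀ hγ hd₀ ih)

end ICML

/-- Induced counting lemma for many clusters. -/
theorem induced_counting_many_clusters :
    ∀ γ d₀ : ℝ, 0 < γ → 0 < d₀ → ∀ k l : ℕ, 2 ≤ k → k ≤ l →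
    ∃ ε₀ : ℝ, 0 < ε₀ ∧ ∀ ε : ℝ, 0 < ε → ε ≤ ε₀ →
    ∃ m₀ : ℕ, ∀ m : ℕ, m₀ ≤ m →
    ∀ (V : Type) [DecidableEq V], ∀ (X : Cx V l) (d : ℕ → ℝ) (p : Finset (Fin l) → ℝ),
    (∀ j, 2 ≤ j → j ≤ k - 1 → d₀ ≤ d j ∧ d j ≤ 1 - d₀) →
    X.IsComplex k →
    (∀ i, (X.C i).card = m ∨ (X.C i).card = m + 1) →
    (∀ L ∈ (Finset.univ : Finset (Fin l)).powersetCard k, X.RestrRegular k ε d L (p L)) →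
    ∀ (W : Type) [Fintype W] [DecidableEq W], Fintype.card W = l →
    ∀ Fg : Finset (Finset W), (∀ e ∈ Fg, e.card = k) →
    ∀ σ : W ≃ Fin l,
    |((ICosig X k Fg σ : ℝ)) -
      (∏ e ∈ Fg, p (e.image σ)) *
        (∏ e ∈ ((Finset.univ : Finset W).powersetCard k \ Fg), (1 - p (e.image σ))) *
        ((∏ j ∈ Finset.Icc 2 (k-1), d j ^ (l.choose j)) * (m : ℝ) ^ l)|
      ≤ γ * ((∏ j ∈ Finset.Icc 2 (k-1), d j ^ (l.choose j)) * (m : ℝ) ^ l) := by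
  intro γ d₀ hγ hd₀ k l hk2 hkl
  obtain ⟨ε₀, hε₀, H⟩ := main_aux k hk2 γ d₀ hγ hd₀ l hkl
  refine ⟨ε₀, hε₀, fun ε hε0 hεle => ?_⟩
  obtain ⟨m₀, Hm⟩ := H ε hε0 hεle
  exact ⟨m₀, fun m hm => Hm m hm⟩

end HypReg
end

section
/- For all o, s ∈ ℕ and all ν > 0, set t := s·o·⌈2ν^{−2}⌉; then there exists n_0 ∈ ℕ such that the following holds. Suppose V is a set with |V| = n ≥ n_0, Q^(1) is an equipartition of V into a^Q ≤ o parts, and H^(1) = {H_1,…,H_s} is a partition of V with H^(1) ≺ Q^(1). Then there exists a partition P^(1) of V such that: (P1) P^(1) is an equipartition of V into a^P ≤ t parts, and a^Q divides a^P; (P2) P^(1) ≺ Q^(1) and P^(1) ≺_{ν²} H^(1). -/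
namespace HypReg

open Finset

attribute [local instance 10] Classical.propDecidable

end HypReg
namespace HypReg

open Finset

private lemma ladder (f : ℕ → ℕ) (mono : ∀ i, f i ≤ f (i+1)) :
    ∀ c x, f 0 ≤ x → x < f c → ∃ i, i < c ∧ f i ≤ x ∧ x < f (i+1) := by
  intro c
  induction c with
  | zero => intro x h1 h2; omega
  | succ c ih =>
    intro x h1 h2
    by_cases h : x < f c
    · obtain ⟨i, hi, h3, h4⟩ := ih x h1 h
      exact ⟨i, by omega, h3, h4⟩
    · exact ⟨c, by omega, by omega, h2⟩

private lemma card_filter_Ico {V : Type} [DecidableEq V] (W : Finset V) (pos : V → ℕ)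
    (hinj : Set.InjOn pos ↑W) (himg : W.image pos = Finset.range W.card)
    (a b : ℕ) (hb : b ≤ W.card) :
    (W.filter fun v => a ≤ pos v ∧ pos v < b).card = b - a := by
  have hsub : ((W.filter fun v => a ≤ pos v ∧ pos v < b) : Set V) ⊆ ↑W := by
    intro x hx
    simp only [Finset.coe_filter, Set.mem_setOf_eq] at hx
    exact hx.1
  have himgf : (W.filter fun v => a ≤ pos v ∧ pos v < b).image pos = Finset.Ico a b := by
    ext x
    constructor
    · intro hx
      obtain ⟨v, hv, rfl⟩ := Finset.mem_image.mp hx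
      rw [Finset.mem_filter] at hv
      exact Finset.mem_Ico.mpr hv.2
    · intro hx
      rw [Finset.mem_Ico] at hx
      have hx2 : x ∈ W.image pos := by
        rw [himg]; exact Finset.mem_range.mpr (lt_of_lt_of_le hx.2 hb)
      obtain ⟨v, hv, rfl⟩ := Finset.mem_image.mp hx2
      exact Finset.mem_image.mpr ⟨v, Finset.mem_filter.mpr ⟨hv, hx.1, hx.2⟩, rfl⟩
  have := Finset.card_image_of_injOn (hinj.mono hsub)
  rw [himgf] at this
  rw [← this, Nat.card_Ico]


/-- One-dimensional refinement lemma: refining an equipartition so as to almost refine a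
further given partition. -/
theorem partition_refinement_dim_one :
    ∀ o s : ℕ, ∀ ν : ℝ, 0 < ν →
    ∃ n₀ : ℕ, ∀ (V : Type) [DecidableEq V], ∀ W : Finset V, n₀ ≤ W.card →
    ∀ (aQ : ℕ) (Qp : Fin aQ → Finset V), aQ ≤ o →
    (∀ i j, i ≠ j → Disjoint (Qp i) (Qp j)) →
    Finset.univ.sup Qp = W →
    (∀ i j, ((Qp i).card : ℤ) ≤ ((Qp j).card : ℤ) + 1) →
    ∀ Hp : Fin s → Finset V,
    (∀ i j, i ≠ j → Disjoint (Hp i) (Hp j)) →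
    Finset.univ.sup Hp = W →
    (∀ i, ∃ j, Hp i ⊆ Qp j) →
    ∃ (aP : ℕ) (Pp : Fin aP → Finset V),
      aP ≤ s * o * ⌈(2 : ℝ) / ν ^ 2⌉₊ ∧ aQ ∣ aP ∧
      (∀ i j, i ≠ j → Disjoint (Pp i) (Pp j)) ∧
      Finset.univ.sup Pp = W ∧
      (∀ i j, ((Pp i).card : ℤ) ≤ ((Pp j).card : ℤ) + 1) ∧
      (∀ i, ∃ j, Pp i ⊆ Qp j) ∧
      ∃ f : Fin aP → Fin s, ∑ i, (((Pp i) \ Hp (f i)).card : ℝ) ≤ ν ^ 2 * (W.card : ℝ) := by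
  classical
  intro o s ν hν
  refine ⟨o * s * ⌈(2 : ℝ) / ν ^ 2⌉₊ + 1, ?_⟩
  intro V _ W hn aQ Qp haQ hQdisj hQsup hQeq Hp hHdisj hHsup _
  set T := ⌈(2 : ℝ) / ν ^ 2⌉₊ with hTdef
  have hT2 : (2 : ℝ) / ν ^ 2 ≤ (T : ℝ) := Nat.le_ceil _
  have hT1 : 0 < T := Nat.ceil_pos.mpr (by positivity)
  have hW : 0 < W.card := by omega
  have hs : 0 < s := by
    rcases Nat.eq_zero_or_pos s with h | h
    · subst h
      rw [Finset.univ_eq_empty, Finset.sup_empty] at hHsup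
      rw [← hHsup] at hW
      simp at hW
    · exact h
  have haQ0 : 0 < aQ := by
    rcases Nat.eq_zero_or_pos aQ with h | h
    · subst h
      rw [Finset.univ_eq_empty, Finset.sup_empty] at hQsup
      rw [← hQsup] at hW
      simp at hW
    · exact h
  set c := s * T with hcdef
  have hc : 0 < c := Nat.mul_pos hs hT1
  set n := W.card with hndef
  -- total versions of the partitions
  set Hn : ℕ → Finset V := fun i => if h : i < s then Hp ⟨i, h⟩ else ∅ with hHndef
  set Qn : ℕ → Finset V := fun j => if h : j < aQ then Qp ⟨j, h⟩ else ∅ with hQndef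
  have hHn_eq : ∀ k (hk : k < s), Hn k = Hp ⟨k, hk⟩ := by
    intro k hk; rw [hHndef]; exact dif_pos hk
  have hQn_eq : ∀ k (hk : k < aQ), Qn k = Qp ⟨k, hk⟩ := by
    intro k hk; rw [hQndef]; exact dif_pos hk
  have hQsub : ∀ j, Qn j ⊆ W := by
    intro j
    rw [hQndef]
    dsimp only
    split
    · rw [← hQsup]
      intro x hx
      exact Finset.mem_sup.mpr ⟨_, Finset.mem_univ _, hx⟩
    · exact Finset.empty_subset _
  -- index functions via choice
  have hHex : ∀ v : V, ∃ i : ℕ, v ∈ W → (i < s ∧ v ∈ Hn i) := by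
    intro v
    by_cases hv : v ∈ W
    · rw [← hHsup] at hv
      obtain ⟨i, -, hi⟩ := Finset.mem_sup.mp hv
      exact ⟨(i : ℕ), fun _ => ⟨i.isLt, by rw [hHn_eq _ i.isLt]; simpa using hi⟩⟩
    · exact ⟨0, fun h => absurd h hv⟩
  choose hI hIspec using hHex
  have hQex : ∀ v : V, ∃ j : ℕ, v ∈ W → (j < aQ ∧ v ∈ Qn j) := by
    intro v
    by_cases hv : v ∈ W
    · rw [← hQsup] at hv
      obtain ⟨j, -, hj⟩ := Finset.mem_sup.mp hv
      exact ⟨(j : ℕ), fun _ => ⟨j.isLt, by rw [hQn_eq _ j.isLt]; simpa using hj⟩⟩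
    · exact ⟨0, fun h => absurd h hv⟩
  choose qI qIspec using hQex
  -- uniqueness of Q-index
  have hqIu : ∀ v ∈ W, ∀ j, j < aQ → v ∈ Qn j → qI v = j := by
    intro v hv j hj hvj
    by_contra hne
    obtain ⟨hq1, hq2⟩ := qIspec v hv
    have hd := hQdisj ⟨qI v, hq1⟩ ⟨j, hj⟩ (by simp [Fin.ext_iff]; omega)
    rw [hQn_eq _ hq1] at hq2
    rw [hQn_eq _ hj] at hvj
    exact (Finset.disjoint_left.mp hd hq2) hvj
  -- pieces
  set piece : ℕ → Finset V := fun t => (Qn (t / s)).filter fun v => hI v = t % s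
    with hpiecedef
  set b : ℕ → ℕ := fun t => (piece t).card with hbdef
  set start : ℕ → ℕ := fun t => ∑ t' ∈ Finset.range t, b t' with hstartdef
  have hstart_succ : ∀ t, start (t + 1) = start t + b t := by
    intro t; rw [hstartdef]; exact Finset.sum_range_succ b t
  have hstart_mono : Monotone start :=
    monotone_nat_of_le_succ (fun t => by rw [hstart_succ]; omega)
  have hpiece_sub : ∀ t, piece t ⊆ W := by
    intro t
    rw [hpiecedef]
    exact (Finset.filter_subset _ _).trans (hQsub _)
  -- div/mod facts
  have hdm : ∀ j i, i < s → (j * s + i) / s = j ∧ (j * s + i) % s = i := by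
    intro j i hi
    constructor
    · rw [mul_comm, Nat.mul_add_div hs, Nat.div_eq_of_lt hi, add_zero]
    · rw [mul_comm, Nat.mul_add_mod, Nat.mod_eq_of_lt hi]
  have hpiece_eq : ∀ j i, i < s → piece (j * s + i) = (Qn j).filter fun v => hI v = i := by
    intro j i hi
    rw [hpiecedef]
    dsimp only
    rw [(hdm j i hi).1, (hdm j i hi).2]
  set tI : V → ℕ := fun v => qI v * s + hI v with htIdef
  have htIlt : ∀ v ∈ W, tI v < aQ * s := by
    intro v hv
    have h1 := (qIspec v hv).1
    have h2 := (hIspec v hv).1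
    rw [htIdef]
    calc qI v * s + hI v < qI v * s + s := by omega
    _ = (qI v + 1) * s := by ring
    _ ≤ aQ * s := Nat.mul_le_mul_right _ (by omega)
  have hmem_piece : ∀ v ∈ W, v ∈ piece (tI v) := by
    intro v hv
    rw [htIdef]
    dsimp only
    rw [hpiece_eq _ _ (hIspec v hv).1]
    exact Finset.mem_filter.mpr ⟨(qIspec v hv).2, rfl⟩
  have hpiece_tI : ∀ t, t < aQ * s → ∀ v ∈ piece t, tI v = t := by
    intro t ht v hv
    have hvW : v ∈ W := hpiece_sub t hv
    rw [hpiecedef] at hv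
    simp only [Finset.mem_filter] at hv
    have hts : t / s < aQ := by
      rw [Nat.div_lt_iff_lt_mul hs]; omega
    have hq : qI v = t / s := hqIu v hvW _ hts hv.1
    rw [htIdef]
    dsimp only
    rw [hq, hv.2]
    rw [mul_comm]
    exact Nat.div_add_mod t s
  -- within-piece indices
  have hidx : ∀ t : ℕ, ∃ g : V → ℕ, (∀ v ∈ piece t, g v < b t) ∧ Set.InjOn g ↑(piece t) := by
    intro t
    refine ⟨fun v => if h : v ∈ piece t then ((piece t).equivFin ⟨v, h⟩ : ℕ) else 0, ?_, ?_⟩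
    · intro v hv
      dsimp only
      rw [dif_pos hv, hbdef]
      exact ((piece t).equivFin ⟨v, hv⟩).isLt
    · intro u hu v hv huv
      rw [Finset.mem_coe] at hu hv
      dsimp only at huv
      rw [dif_pos hu, dif_pos hv] at huv
      have := (piece t).equivFin.injective (Fin.ext huv)
      exact congrArg Subtype.val this
  choose gIdx hgIdx1 hgIdx2 using hidx
  set pos : V → ℕ := fun v => start (tI v) + gIdx (tI v) v with hposdef
  have hpos_lb : ∀ v, start (tI v) ≤ pos v := fun v => Nat.le_add_right _ _
  have hpos_ub : ∀ v ∈ W, pos v < start (tI v + 1) := by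
    intro v hv
    rw [hstart_succ, hposdef]
    exact Nat.add_lt_add_left (hgIdx1 _ _ (hmem_piece v hv)) _
  have hpos_inj : Set.InjOn pos ↑W := by
    intro u hu v hv huv
    rw [Finset.mem_coe] at hu hv
    rcases lt_trichotomy (tI u) (tI v) with h | h | h
    · exfalso
      have : pos u < pos v :=
        lt_of_lt_of_le (hpos_ub u hu) (le_trans (hstart_mono h) (hpos_lb v))
      omega
    · have h1 : u ∈ piece (tI v) := by rw [← h]; exact hmem_piece u hu
      have h2 : v ∈ piece (tI v) := hmem_piece v hv
      rw [hposdef] at huv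
      dsimp only at huv
      rw [h] at huv
      have : gIdx (tI v) u = gIdx (tI v) v := by omega
      exact hgIdx2 (tI v) (Finset.mem_coe.mpr h1) (Finset.mem_coe.mpr h2) this
    · exfalso
      have : pos v < pos u :=
        lt_of_lt_of_le (hpos_ub v hv) (le_trans (hstart_mono h) (hpos_lb u))
      omega
  -- total count
  have hqcard : ∀ j, (Qn j).card = ∑ i ∈ Finset.range s, b (j * s + i) := by
    intro j
    have h1 : (Qn j).card = ∑ i ∈ Finset.range s, ((Qn j).filter fun v => hI v = i).card :=
      Finset.card_eq_sum_card_fiberwise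
        (fun v hv => Finset.mem_range.mpr (hIspec v (hQsub j hv)).1)
    rw [h1]
    refine Finset.sum_congr rfl fun i hi => ?_
    rw [hbdef]
    dsimp only
    rw [hpiece_eq j i (Finset.mem_range.mp hi)]
  have hstart_block : ∀ J, start ((J + 1) * s) = start (J * s) + (Qn J).card := by
    intro J
    have h1 : (J + 1) * s = J * s + s := by ring
    rw [h1, hstartdef]
    dsimp only
    rw [Finset.sum_range_add, hqcard J]
  have hsum_n : ∑ j ∈ Finset.range aQ, (Qn j).card = n := by
    rw [Finset.sum_range (fun j => (Qn j).card)]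
    have h1 : ∀ j : Fin aQ, (Qn (j : ℕ)).card = (Qp j).card := by
      intro j; rw [hQn_eq _ j.isLt]
    rw [Finset.sum_congr rfl (fun j _ => h1 j)]
    rw [hndef, ← hQsup, Finset.sup_eq_biUnion,
      Finset.card_biUnion (fun x _ y _ hxy => hQdisj x y hxy)]
  have hstart_mul : ∀ J, start (J * s) = ∑ j ∈ Finset.range J, (Qn j).card := by
    intro J
    induction J with
    | zero => simp [hstartdef]
    | succ J ih => rw [hstart_block J, ih, Finset.sum_range_succ]
  have hstart_total : start (aQ * s) = n := by rw [hstart_mul aQ, hsum_n]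
  have hpos_n : ∀ v ∈ W, pos v < n := by
    intro v hv
    calc pos v < start (tI v + 1) := hpos_ub v hv
    _ ≤ start (aQ * s) := hstart_mono (htIlt v hv)
    _ = n := hstart_total
  have himg : W.image pos = Finset.range n := by
    apply Finset.eq_of_subset_of_card_le
    · intro x hx
      obtain ⟨v, hv, rfl⟩ := Finset.mem_image.mp hx
      exact Finset.mem_range.mpr (hpos_n v hv)
    · rw [Finset.card_range, Finset.card_image_of_injOn hpos_inj]
  -- class size bounds
  set M := n / aQ with hMdef
  have hQbounds : ∀ j, j < aQ → M ≤ (Qn j).card ∧ (Qn j).card ≤ M + 1 := by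
    intro j hj
    rw [hQn_eq _ hj]
    set jf : Fin aQ := ⟨j, hj⟩
    have hsum : ∑ j' : Fin aQ, (Qp j').card = n := by
      rw [← hsum_n, Finset.sum_range (fun j => (Qn j).card)]
      exact Finset.sum_congr rfl (fun j' _ => by rw [hQn_eq _ j'.isLt])
    have herase : ∑ j' ∈ Finset.univ.erase jf, (Qp j').card + (Qp jf).card = n := by
      rw [← hsum]
      exact Finset.sum_erase_add _ _ (Finset.mem_univ jf)
    have hcard_erase : (Finset.univ.erase jf).card = aQ - 1 := by
      rw [Finset.card_erase_of_mem (Finset.mem_univ _), Finset.card_univ, Fintype.card_fin]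
    constructor
    · -- lower bound
      have h2 : ∑ j' ∈ Finset.univ.erase jf, (Qp j').card
          ≤ (aQ - 1) * ((Qp jf).card + 1) := by
        calc ∑ j' ∈ Finset.univ.erase jf, (Qp j').card
            ≤ ∑ _j' ∈ Finset.univ.erase jf, ((Qp jf).card + 1) :=
              Finset.sum_le_sum (fun j' _ => by
                have := hQeq j' jf; omega)
          _ = (aQ - 1) * ((Qp jf).card + 1) := by
              rw [Finset.sum_const, hcard_erase, smul_eq_mul]
      have h3 : n < aQ * ((Qp jf).card + 1) := by
        have h4 : (aQ - 1) * ((Qp jf).card + 1) + ((Qp jf).card + 1)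
            = aQ * ((Qp jf).card + 1) := by
          have h5 : aQ - 1 + 1 = aQ := by omega
          calc (aQ - 1) * ((Qp jf).card + 1) + ((Qp jf).card + 1)
              = (aQ - 1 + 1) * ((Qp jf).card + 1) := by ring
            _ = aQ * ((Qp jf).card + 1) := by rw [h5]
        calc n = ∑ j' ∈ Finset.univ.erase jf, (Qp j').card + (Qp jf).card := herase.symm
          _ ≤ (aQ - 1) * ((Qp jf).card + 1) + (Qp jf).card := Nat.add_le_add_right h2 _
          _ < (aQ - 1) * ((Qp jf).card + 1) + ((Qp jf).card + 1) :=
              Nat.add_lt_add_left (Nat.lt_succ_self _) _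
          _ = aQ * ((Qp jf).card + 1) := h4
      have h5 : M < (Qp jf).card + 1 := by
        rw [hMdef]
        rw [Nat.div_lt_iff_lt_mul haQ0]
        calc n < aQ * ((Qp jf).card + 1) := h3
          _ = ((Qp jf).card + 1) * aQ := by ring
      exact Nat.lt_succ_iff.mp h5
    · -- upper bound
      rcases Nat.eq_zero_or_pos (Qp jf).card with h0 | h0
      · rw [h0]; exact Nat.zero_le _
      · have h2 : ∑ j' : Fin aQ, (Qp j').card ≥ ∑ _j' : Fin aQ, ((Qp jf).card - 1) :=
          Finset.sum_le_sum (fun j' _ => by have := hQeq jf j'; omega)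
        have h3 : ∑ _j' : Fin aQ, ((Qp jf).card - 1) = aQ * ((Qp jf).card - 1) := by
          rw [Finset.sum_const, Finset.card_univ, Fintype.card_fin, smul_eq_mul]
        have h4 : aQ * ((Qp jf).card - 1) ≤ n := by rw [← h3, ← hsum]; exact h2
        have h5 : (Qp jf).card - 1 ≤ M := by
          rw [hMdef, Nat.le_div_iff_mul_le haQ0]
          calc ((Qp jf).card - 1) * aQ = aQ * ((Qp jf).card - 1) := by ring
            _ ≤ n := h4
        have h6 : (Qp jf).card - 1 + 1 ≤ M + 1 := Nat.succ_le_succ h5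
        rwa [Nat.sub_add_cancel h0] at h6
  -- part sizes
  set m := M / c with hmdef
  have hcmM : c * m ≤ M := by
    rw [hmdef]
    calc c * (M / c) = M / c * c := by ring
    _ ≤ M := Nat.div_mul_le_self M c
  have hMcm : M < c * m + c := by
    have h1 := Nat.div_add_mod M c
    have h2 : M % c < c := Nat.mod_lt _ hc
    rw [hmdef]
    omega
  set r : ℕ → ℕ := fun j => (Qn j).card - c * m with hrdef
  set cut : ℕ → ℕ → ℕ := fun j i => start (j * s) + (i * m + min i (r j)) with hcutdef
  have hcut0 : ∀ j, cut j 0 = start (j * s) := by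
    intro j; rw [hcutdef]; simp
  have hr_le : ∀ j, j < aQ → r j ≤ c := by
    intro j hj
    have h1 := (hQbounds j hj).2
    have h2 := hMcm
    rw [hrdef]
    dsimp only
    omega
  have hcm_le : ∀ j, j < aQ → c * m ≤ (Qn j).card := by
    intro j hj
    exact le_trans hcmM (hQbounds j hj).1
  have hcutc : ∀ j, j < aQ → cut j c = start ((j + 1) * s) := by
    intro j hj
    rw [hcutdef]
    dsimp only
    rw [min_eq_right (hr_le j hj), hstart_block j]
    have h1 := hcm_le j hj
    have h2 : c * m + r j = (Qn j).card := by
      rw [hrdef]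
      dsimp only
      omega
    omega
  have hcut_mono : ∀ j i i', i ≤ i' → cut j i ≤ cut j i' := by
    intro j i i' hii
    rw [hcutdef]
    dsimp only
    have h1 : i * m ≤ i' * m := Nat.mul_le_mul_right _ hii
    have h2 : min i (r j) ≤ min i' (r j) := by omega
    omega
  have hcut_step : ∀ j i, cut j i + m ≤ cut j (i + 1) ∧ cut j (i + 1) ≤ cut j i + (m + 1) := by
    intro j i
    rw [hcutdef]
    dsimp only
    have h1 : (i + 1) * m = i * m + m := by ring
    omega
  -- the parts
  set aP := aQ * c with haPdef
  set Pp : Fin aP → Finset V := fun p =>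
    W.filter fun v => cut ((p : ℕ) / c) ((p : ℕ) % c) ≤ pos v ∧
      pos v < cut ((p : ℕ) / c) ((p : ℕ) % c + 1) with hPpdef
  have hjlt : ∀ p : Fin aP, (p : ℕ) / c < aQ := by
    intro p
    rw [Nat.div_lt_iff_lt_mul hc]
    exact lt_of_lt_of_eq p.isLt haPdef
  have hilt : ∀ p : Fin aP, (p : ℕ) % c < c := fun p => Nat.mod_lt _ hc
  -- membership characterization
  have hclass : ∀ v ∈ W, ∀ j, j < aQ →
      ((start (j * s) ≤ pos v ∧ pos v < start ((j + 1) * s)) ↔ qI v = j) := by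
    intro v hv j hj
    have hforward : ∀ j', j' < aQ → qI v = j' →
        start (j' * s) ≤ pos v ∧ pos v < start ((j' + 1) * s) := by
      intro j' hj' hq
      constructor
      · calc start (j' * s) ≤ start (tI v) := by
              apply hstart_mono
              rw [htIdef]; dsimp only; rw [hq]; omega
          _ ≤ pos v := hpos_lb v
      · calc pos v < start (tI v + 1) := hpos_ub v hv
          _ ≤ start ((j' + 1) * s) := by
              apply hstart_mono
              rw [htIdef]
              dsimp only
              rw [hq]
              have := (hIspec v hv).1
              calc j' * s + hI v + 1 ≤ j' * s + s := by omega
                _ = (j' + 1) * s := by ring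
    constructor
    · intro h
      by_contra hne
      have hq := (qIspec v hv).1
      have h2 := hforward (qI v) hq rfl
      rcases Nat.lt_or_ge (qI v) j with hlt | hge
      · have : start ((qI v + 1) * s) ≤ start (j * s) :=
          hstart_mono (Nat.mul_le_mul_right _ (by omega))
        omega
      · have hlt2 : j < qI v := by omega
        have : start ((j + 1) * s) ≤ start (qI v * s) :=
          hstart_mono (Nat.mul_le_mul_right _ (by omega))
        omega
    · intro h
      exact hforward j hj h
  -- parts lie in Q classes
  have hPQ : ∀ p : Fin aP, ∀ v ∈ Pp p, qI v = (p : ℕ) / c := by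
    intro p v hv
    rw [hPpdef] at hv
    simp only [Finset.mem_filter] at hv
    obtain ⟨hvW, h1, h2⟩ := hv
    apply (hclass v hvW _ (hjlt p)).mp
    constructor
    · calc start ((p : ℕ) / c * s) = cut ((p : ℕ) / c) 0 := (hcut0 _).symm
        _ ≤ cut ((p : ℕ) / c) ((p : ℕ) % c) := hcut_mono _ _ _ (Nat.zero_le _)
        _ ≤ pos v := h1
    · calc pos v < cut ((p : ℕ) / c) ((p : ℕ) % c + 1) := h2
        _ ≤ cut ((p : ℕ) / c) c := hcut_mono _ _ _ (hilt p)
        _ = start (((p : ℕ) / c + 1) * s) := hcutc _ (hjlt p)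
  have hPsubW : ∀ p : Fin aP, Pp p ⊆ W := by
    intro p
    rw [hPpdef]
    exact Finset.filter_subset _ _
  have hPsubQ : ∀ p : Fin aP, ∃ j : Fin aQ, Pp p ⊆ Qp j := by
    intro p
    refine ⟨⟨(p : ℕ) / c, hjlt p⟩, ?_⟩
    intro v hv
    have hvW : v ∈ W := hPsubW p hv
    have h1 := hPQ p v hv
    have h2 := (qIspec v hvW).2
    rw [h1] at h2
    rw [hQn_eq _ (hjlt p)] at h2
    exact h2
  -- sizes
  have hcutn : ∀ p : Fin aP, cut ((p : ℕ) / c) ((p : ℕ) % c + 1) ≤ n := by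
    intro p
    calc cut ((p : ℕ) / c) ((p : ℕ) % c + 1) ≤ cut ((p : ℕ) / c) c := hcut_mono _ _ _ (hilt p)
      _ = start (((p : ℕ) / c + 1) * s) := hcutc _ (hjlt p)
      _ ≤ start (aQ * s) := hstart_mono (Nat.mul_le_mul_right _ (hjlt p))
      _ = n := hstart_total
  have hsize : ∀ p : Fin aP,
      (Pp p).card = cut ((p : ℕ) / c) ((p : ℕ) % c + 1) - cut ((p : ℕ) / c) ((p : ℕ) % c) := by
    intro p
    rw [hPpdef]
    exact card_filter_Ico W pos hpos_inj himg _ _ (hcutn p)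
  have hsize_bounds : ∀ p : Fin aP, m ≤ (Pp p).card ∧ (Pp p).card ≤ m + 1 := by
    intro p
    have h1 := hsize p
    obtain ⟨h2a, h2b⟩ := hcut_step ((p : ℕ) / c) ((p : ℕ) % c)
    constructor
    · rw [h1]
      exact Nat.le_sub_of_add_le (by omega)
    · rw [h1]
      exact Nat.sub_le_iff_le_add.mpr (by omega)
  -- disjointness
  have hPdisj : ∀ p q : Fin aP, p ≠ q → Disjoint (Pp p) (Pp q) := by
    have key : ∀ p q : Fin aP, (p : ℕ) < (q : ℕ) → Disjoint (Pp p) (Pp q) := by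
      intro p q hpq
      rw [Finset.disjoint_left]
      intro v hvp hvq
      have hend : cut ((p : ℕ) / c) ((p : ℕ) % c + 1) ≤ cut ((q : ℕ) / c) ((q : ℕ) % c) := by
        rcases Nat.lt_or_ge ((p : ℕ) / c) ((q : ℕ) / c) with h | h
        · calc cut ((p : ℕ) / c) ((p : ℕ) % c + 1) ≤ cut ((p : ℕ) / c) c :=
                hcut_mono _ _ _ (hilt p)
            _ = start (((p : ℕ) / c + 1) * s) := hcutc _ (hjlt p)
            _ ≤ start ((q : ℕ) / c * s) := hstart_mono (Nat.mul_le_mul_right _ (by omega))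
            _ = cut ((q : ℕ) / c) 0 := (hcut0 _).symm
            _ ≤ cut ((q : ℕ) / c) ((q : ℕ) % c) := hcut_mono _ _ _ (Nat.zero_le _)
        · have hdiv : (p : ℕ) / c ≤ (q : ℕ) / c := Nat.div_le_div_right (le_of_lt hpq)
          have heq : (p : ℕ) / c = (q : ℕ) / c := by omega
          have hmod : (p : ℕ) % c < (q : ℕ) % c := by
            have e1 := Nat.div_add_mod (p : ℕ) c
            have e2 := Nat.div_add_mod (q : ℕ) c
            by_contra hcon
            push_neg at hcon
            have : (q : ℕ) ≤ (p : ℕ) := by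
              calc (q : ℕ) = c * ((q : ℕ) / c) + (q : ℕ) % c := e2.symm
                _ ≤ c * ((p : ℕ) / c) + (p : ℕ) % c := by rw [heq]; omega
                _ = (p : ℕ) := e1
            omega
          rw [heq]
          exact hcut_mono _ _ _ hmod
      rw [hPpdef] at hvp hvq
      simp only [Finset.mem_filter] at hvp hvq
      omega
    intro p q hpq
    rcases lt_trichotomy ((p : ℕ)) ((q : ℕ)) with h | h | h
    · exact key p q h
    · exact absurd (Fin.ext h) hpq
    · exact (key q p h).symm
  -- cover
  have hPsup : Finset.univ.sup Pp = W := by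
    apply le_antisymm
    · exact Finset.sup_le (fun p _ => hPsubW p)
    · intro v hv
      have hj := (qIspec v hv).1
      have h1 := (hclass v hv (qI v) hj).mpr rfl
      rw [← hcut0 (qI v)] at h1
      rw [← hcutc (qI v) hj] at h1
      obtain ⟨i, hic, h2, h3⟩ := ladder (cut (qI v))
        (fun i => le_trans (Nat.le_add_right _ m) (hcut_step (qI v) i).1) c (pos v) h1.1 h1.2
      have hplt : qI v * c + i < aP := by
        rw [haPdef]
        calc qI v * c + i < qI v * c + c := by omega
          _ = (qI v + 1) * c := by ring
          _ ≤ aQ * c := Nat.mul_le_mul_right _ (by omega)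
      set p : Fin aP := ⟨qI v * c + i, hplt⟩ with hpdef
      have hdm2 : (qI v * c + i) / c = qI v ∧ (qI v * c + i) % c = i := by
        constructor
        · rw [mul_comm, Nat.mul_add_div hc, Nat.div_eq_of_lt hic, add_zero]
        · rw [mul_comm, Nat.mul_add_mod, Nat.mod_eq_of_lt hic]
      have hvp : v ∈ Pp p := by
        rw [hPpdef]
        simp only [Finset.mem_filter]
        refine ⟨hv, ?_, ?_⟩
        · rw [hdm2.1, hdm2.2]; exact h2
        · rw [hdm2.1, hdm2.2]; exact h3
      exact Finset.mem_sup.mpr ⟨p, Finset.mem_univ p, hvp⟩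
  -- error assignment
  have hgex : ∀ p : Fin aP, ∃ g : Fin s, ∀ v ∈ Pp p, v ∉ Hp g →
      pos v < start (tI v) + (m + 1) := by
    intro p
    by_cases hne : (Pp p).Nonempty
    · obtain ⟨v₀, hv₀, hmin⟩ := Finset.exists_min_image (Pp p) pos hne
      have hv₀W : v₀ ∈ W := hPsubW p hv₀
      refine ⟨⟨hI v₀, (hIspec v₀ hv₀W).1⟩, ?_⟩
      intro v hv hvH
      have hvW : v ∈ W := hPsubW p hv
      have hne' : hI v ≠ hI v₀ := by
        intro he
        apply hvH
        have h2 := (hIspec v hvW).2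
        rw [he, hHn_eq _ (hIspec v₀ hv₀W).1] at h2
        exact h2
      have hq1 : qI v = (p : ℕ) / c := hPQ p v hv
      have hq2 : qI v₀ = (p : ℕ) / c := hPQ p v₀ hv₀
      have htne : tI v ≠ tI v₀ := by
        rw [htIdef]
        dsimp only
        rw [hq1, hq2]
        omega
      rcases Nat.lt_or_ge (tI v) (tI v₀) with h | h
      · exfalso
        have h1 : pos v < pos v₀ :=
          lt_of_lt_of_le (hpos_ub v hvW) (le_trans (hstart_mono h) (hpos_lb v₀))
        have h2 := hmin v hv
        omega
      · have hlt : tI v₀ < tI v := by omega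
        have h1 : pos v₀ < start (tI v) :=
          lt_of_lt_of_le (hpos_ub v₀ hv₀W) (hstart_mono hlt)
        -- pos v < cut (i+1) ≤ cut i + (m+1) ≤ pos v₀ + (m+1) ≤ start (tI v) + m
        rw [hPpdef] at hv hv₀
        simp only [Finset.mem_filter] at hv hv₀
        have h2 := (hcut_step ((p : ℕ) / c) ((p : ℕ) % c)).2
        have h3 : cut ((p : ℕ) / c) ((p : ℕ) % c) ≤ pos v₀ := hv₀.2.1
        have h4 : pos v < cut ((p : ℕ) / c) ((p : ℕ) % c + 1) := hv.2.2
        calc pos v < cut ((p : ℕ) / c) ((p : ℕ) % c) + (m + 1) := lt_of_lt_of_le h4 h2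
          _ ≤ pos v₀ + (m + 1) := Nat.add_le_add_right h3 _
          _ < start (tI v) + (m + 1) := Nat.add_lt_add_right h1 _
    · refine ⟨⟨0, hs⟩, ?_⟩
      intro v hv
      rw [Finset.not_nonempty_iff_eq_empty] at hne
      rw [hne] at hv
      exact absurd hv (Finset.notMem_empty v)
  choose g hg using hgex
  -- the misassigned set
  have hMcard : (W.filter fun v => pos v < start (tI v) + (m + 1)).card
      ≤ aQ * s * (m + 1) := by
    have hsub : (W.filter fun v => pos v < start (tI v) + (m + 1))
        ⊆ (Finset.range (aQ * s)).biUnion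
          (fun t => (piece t).filter fun v => pos v < start t + (m + 1)) := by
      intro v hv
      rw [Finset.mem_filter] at hv
      refine Finset.mem_biUnion.mpr ⟨tI v, Finset.mem_range.mpr (htIlt v hv.1),
        Finset.mem_filter.mpr ⟨hmem_piece v hv.1, hv.2⟩⟩
    have hper : ∀ t ∈ Finset.range (aQ * s),
        ((piece t).filter fun v => pos v < start t + (m + 1)).card ≤ m + 1 := by
      intro t ht
      rw [Finset.mem_range] at ht
      have h1 : ((piece t).filter fun v => pos v < start t + (m + 1)).card
          ≤ (Finset.Ico (start t) (start t + (m + 1))).card := by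
        apply Finset.card_le_card_of_injOn pos
        · intro v hv
          rw [Finset.mem_coe] at hv ⊢; rw [Finset.mem_filter] at hv
          have htv : tI v = t := hpiece_tI t ht v hv.1
          refine Finset.mem_Ico.mpr ⟨?_, hv.2⟩
          rw [← htv]
          exact hpos_lb v
        · apply hpos_inj.mono
          intro v hv
          rw [Finset.mem_coe, Finset.mem_filter] at hv
          exact Finset.mem_coe.mpr (hpiece_sub t hv.1)
      rwa [Nat.card_Ico, Nat.add_sub_cancel_left] at h1
    calc (W.filter fun v => pos v < start (tI v) + (m + 1)).card
        ≤ ((Finset.range (aQ * s)).biUnion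
          (fun t => (piece t).filter fun v => pos v < start t + (m + 1))).card :=
          Finset.card_le_card hsub
      _ ≤ ∑ t ∈ Finset.range (aQ * s),
          ((piece t).filter fun v => pos v < start t + (m + 1)).card :=
          Finset.card_biUnion_le
      _ ≤ ∑ _t ∈ Finset.range (aQ * s), (m + 1) := Finset.sum_le_sum hper
      _ = aQ * s * (m + 1) := by rw [Finset.sum_const, Finset.card_range, smul_eq_mul]
  have hEsum : ∑ p : Fin aP, (Pp p \ Hp (g p)).card ≤ aQ * s * (m + 1) := by
    have hdisjE : ∀ x ∈ (Finset.univ : Finset (Fin aP)), ∀ y ∈ Finset.univ, x ≠ y →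
        Disjoint (Pp x \ Hp (g x)) (Pp y \ Hp (g y)) := by
      intro x _ y _ hxy
      exact Finset.disjoint_of_subset_left (Finset.sdiff_subset)
        (Finset.disjoint_of_subset_right (Finset.sdiff_subset) (hPdisj x y hxy))
    have h1 : ∑ p : Fin aP, (Pp p \ Hp (g p)).card
        = ((Finset.univ : Finset (Fin aP)).biUnion (fun p => Pp p \ Hp (g p))).card :=
      (Finset.card_biUnion hdisjE).symm
    rw [h1]
    refine le_trans (Finset.card_le_card ?_) hMcard
    intro v hv
    obtain ⟨p, -, hvp⟩ := Finset.mem_biUnion.mp hv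
    have h2 := Finset.mem_sdiff.mp hvp
    have hvW : v ∈ W := hPsubW p h2.1
    exact Finset.mem_filter.mpr ⟨hvW, hg p v h2.1 h2.2⟩
  -- assemble
  refine ⟨aP, Pp, ?_, ⟨c, rfl⟩, hPdisj, hPsup, ?_, hPsubQ, g, ?_⟩
  · -- aP ≤ s * o * T
    rw [haPdef, hcdef]
    calc aQ * (s * T) ≤ o * (s * T) := Nat.mul_le_mul_right _ haQ
      _ = s * o * T := by ring
  · -- equipartition
    intro i j
    have h1 := hsize_bounds i
    have h2 := hsize_bounds j
    omega
  · -- error bound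
    have hcast : ∑ p : Fin aP, ((Pp p \ Hp (g p)).card : ℝ)
        = ((∑ p : Fin aP, (Pp p \ Hp (g p)).card : ℕ) : ℝ) := by
      push_cast
      rfl
    rw [hcast]
    have h1 : ((∑ p : Fin aP, (Pp p \ Hp (g p)).card : ℕ) : ℝ)
        ≤ ((aQ * s * (m + 1) : ℕ) : ℝ) := Nat.cast_le.mpr hEsum
    refine le_trans h1 ?_
    -- numeric finish
    have f1 : aQ * s * m * T ≤ n := by
      have e1 : aQ * s * m * T = aQ * (c * m) := by rw [hcdef]; ring
      rw [e1]
      calc aQ * (c * m) ≤ aQ * M := Nat.mul_le_mul_left _ hcmM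
        _ ≤ n := by rw [hMdef]; exact Nat.mul_div_le n aQ
    have hT0 : (0 : ℝ) < (T : ℝ) := by exact_mod_cast hT1
    have f2 : (2 : ℝ) ≤ ν ^ 2 * (T : ℝ) := by
      rw [div_le_iff₀ (by positivity : (0:ℝ) < ν ^ 2)] at hT2
      linarith
    have hnR : ((o : ℝ) * s * T + 1) ≤ (n : ℝ) := by
      have : (o * s * T + 1 : ℕ) ≤ n := hn
      exact_mod_cast this
    have hn0 : (0 : ℝ) ≤ (n : ℝ) := Nat.cast_nonneg n
    have f1R : ((aQ : ℝ) * s * m) * T ≤ n := by exact_mod_cast f1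
    have hA0 : (0 : ℝ) ≤ (aQ : ℝ) * s * m := by positivity
    -- aQ*s*m ≤ ν²n/2
    have g1 : 2 * ((aQ : ℝ) * s * m) ≤ ν ^ 2 * n := by
      have h4 : ν ^ 2 * (((aQ : ℝ) * s * m) * T) ≤ ν ^ 2 * n :=
        mul_le_mul_of_nonneg_left f1R (by positivity)
      have h5 : ((aQ : ℝ) * s * m) * 2 ≤ ((aQ : ℝ) * s * m) * (ν ^ 2 * T) :=
        mul_le_mul_of_nonneg_left f2 hA0
      nlinarith
    -- aQ*s ≤ ν²n/2
    have g2 : 2 * ((aQ : ℝ) * s) ≤ ν ^ 2 * n := by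
      have haQR : (aQ : ℝ) ≤ o := by exact_mod_cast haQ
      have hsR : (0 : ℝ) ≤ (s : ℝ) := Nat.cast_nonneg s
      have h4 : (aQ : ℝ) * s ≤ (o : ℝ) * s := mul_le_mul_of_nonneg_right haQR hsR
      have h5 : 2 * ((o : ℝ) * s) ≤ ν ^ 2 * ((o : ℝ) * s * T) := by
        have h6 : ((o : ℝ) * s) * 2 ≤ ((o : ℝ) * s) * (ν ^ 2 * T) :=
          mul_le_mul_of_nonneg_left f2 (by positivity)
        nlinarith
      have h7 : ν ^ 2 * ((o : ℝ) * s * T) ≤ ν ^ 2 * n := by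
        have : (o : ℝ) * s * T ≤ n := by linarith
        exact mul_le_mul_of_nonneg_left this (by positivity)
      linarith
    have hfinal : ((aQ * s * (m + 1) : ℕ) : ℝ) = (aQ : ℝ) * s * m + (aQ : ℝ) * s := by
      push_cast
      ring
    rw [hfinal, hndef]
    rw [hndef] at g1 g2
    linarith
end HypReg
end
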